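/- arXiv:1510.02647 — 3 statements merged into one kernel-verified Lean document; each statement's English description precedes it below -/
import Mathlib

section
/- If (A, i) and (B, j) are affine cellular algebras over a Noetherian domain k, then the tensor product A ⊗_k B is affine cellular with respect to the involution i ⊗ j. Moreover, if the layers of A are generalized matrix algebras (M_{n_r}(B_r), ρ_r) and those of B are (M_{m_s}(C_s), σ_s), then the layers of A ⊗_k B are the generalized matrix algebras (M_{n_r m_s}(B_r ⊗_k C_s), ρ_r ⊗ σ_s). -/
/-!
STATEMENT 2: If `(A, i)` and `(B, j)` are affine cellular algebras over a Noetherian domain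
`k`, then `A ⊗[k] B` is affine cellular with respect to the involution `i ⊗ j`.  Moreover,
if the layers of `A` are the generalized matrix algebras `(M_{n_r}(B_r), ρ_r)` and those of
`B` are `(M_{m_s}(C_s), σ_s)`, then the layers of `A ⊗[k] B` are the generalized matrix
algebras `(M_{n_r m_s}(B_r ⊗[k] C_s), ρ_r ⊗ σ_s)`.

An affine cell chain is encoded by `AffineCellularChain`: a chain of two-sided ideals
`⊥ = J 0 ⊆ ⋯ ⊆ J m = ⊤` stable under the involution, such that each subquotient
`J (l+1) / J l` is isomorphic (compatibly with the involutions, as in [KX2, Prop. 2.2]) to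
a generalized matrix algebra `(M_{n_l}(B_l), ρ_l)` over an affine commutative `k`-algebra
`B_l` with involution; the bilinear form `ρ_l` is recorded by its Gram matrix `Ψ l`, and
the isomorphism is recorded by a `k`-linear map `φ l` defined on `J (l+1)`, with kernel
`J l`, surjective onto `M_{n_l}(B_l)`, intertwining multiplication (`x·y ↦ φx · Ψ · φy`)
and the involutions (`i ↦` σ-twisted transpose).
-/

open scoped TensorProduct

universe u v w

/-- An involution (`k`-linear anti-automorphism of order two) of a `k`-algebra. -/
def IsInvolution {k : Type u} {A : Type v} [CommRing k] [Ring A] [Algebra k A]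
    (i : A →ₗ[k] A) : Prop :=
  (∀ a b : A, i (a * b) = i b * i a) ∧ ∀ a : A, i (i a) = a

/-- An affine commutative `k`-algebra equipped with a `k`-involution. -/
structure AffAlgWithInvolution (k : Type u) [CommRing k] : Type (max u (w + 1)) where
  carrier : Type w
  [commRing : CommRing carrier]
  [algebra : Algebra k carrier]
  affine : Algebra.FiniteType k carrier
  σ : carrier →ₐ[k] carrier
  σ_invol : ∀ b, σ (σ b) = b

attribute [instance] AffAlgWithInvolution.commRing AffAlgWithInvolution.algebra

/-- An affine cell chain for `(A, inv)` in the sense of Koenig–Xi. -/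
structure AffineCellularChain (k : Type u) (A : Type v) [CommRing k] [Ring A] [Algebra k A]
    (inv : A →ₗ[k] A) : Type (max u v (w + 1)) where
  m : ℕ
  J : Fin (m + 1) → TwoSidedIdeal A
  mono : Monotone J
  bot : J 0 = ⊥
  top : J (Fin.last m) = ⊤
  inv_stable : ∀ l, ∀ a ∈ J l, inv a ∈ J l
  nl : Fin m → ℕ
  layer : Fin m → AffAlgWithInvolution.{u, w} k
  /-- the Gram matrix of the bilinear form `ρ_l` -/
  Ψ : ∀ l : Fin m, Matrix (Fin (nl l)) (Fin (nl l)) (layer l).carrier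
  Ψ_sym : ∀ l, ((Ψ l).transpose).map (layer l).σ = Ψ l
  /-- the structure map realizing `J (l+1) / J l ≅ (M_{n_l}(B_l), ρ_l)` -/
  φ : ∀ l : Fin m, A →ₗ[k] Matrix (Fin (nl l)) (Fin (nl l)) (layer l).carrier
  φ_mul : ∀ l, ∀ x ∈ J l.succ, ∀ y ∈ J l.succ, φ l (x * y) = φ l x * Ψ l * φ l y
  φ_ker : ∀ l, ∀ x ∈ J l.succ, (φ l x = 0 ↔ x ∈ J l.castSucc)
  φ_surj : ∀ l, ∀ M : Matrix (Fin (nl l)) (Fin (nl l)) (layer l).carrier,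
    ∃ x ∈ J l.succ, φ l x = M
  φ_inv : ∀ l, ∀ x ∈ J l.succ, φ l (inv x) = ((φ l x).transpose).map (layer l).σ

namespace Stmt2Aux

noncomputable section

/-! ### Finite type of tensor products -/

theorem ftTensor {k : Type u} [CommRing k] {B C : Type w} [CommRing B] [CommRing C]
    [Algebra k B] [Algebra k C]
    (hB : Algebra.FiniteType k B) (hC : Algebra.FiniteType k C) :
    Algebra.FiniteType k (B ⊗[k] C) := by
  obtain ⟨hB⟩ := hB; obtain ⟨hC⟩ := hC
  rw [Subalgebra.fg_def] at hB hC
  refine ⟨?_⟩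
  rw [Subalgebra.fg_def]
  obtain ⟨s, hsf, hs⟩ := hB
  obtain ⟨t, htf, ht⟩ := hC
  refine ⟨(Algebra.TensorProduct.includeLeft (S := k) (A := B) (B := C)) '' s ∪
      (Algebra.TensorProduct.includeRight (R := k) (A := B) (B := C)) '' t,
      (hsf.image _).union (htf.image _), ?_⟩
  rw [Algebra.adjoin_union, ← AlgHom.map_adjoin, ← AlgHom.map_adjoin, hs, ht]
  rw [eq_top_iff]
  rintro x -
  induction x using TensorProduct.induction_on with
  | zero => exact Subalgebra.zero_mem _
  | tmul b c =>
      have h1' : b ⊗ₜ[k] (1:C) ∈ Subalgebra.map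
          (Algebra.TensorProduct.includeLeft (S := k) (A := B) (B := C)) ⊤ :=
        ⟨b, Algebra.mem_top, rfl⟩
      have h2' : (1:B) ⊗ₜ[k] c ∈ Subalgebra.map
          (Algebra.TensorProduct.includeRight (R := k) (A := B) (B := C)) ⊤ :=
        ⟨c, Algebra.mem_top, rfl⟩
      have h1 := (le_sup_left (a := Subalgebra.map
          (Algebra.TensorProduct.includeLeft (S := k) (A := B) (B := C)) ⊤)
          (b := Subalgebra.map
          (Algebra.TensorProduct.includeRight (R := k) (A := B) (B := C)) ⊤)) h1'
      have h2 := (le_sup_right (a := Subalgebra.map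
          (Algebra.TensorProduct.includeLeft (S := k) (A := B) (B := C)) ⊤)
          (b := Subalgebra.map
          (Algebra.TensorProduct.includeRight (R := k) (A := B) (B := C)) ⊤)) h2'
      have := Subalgebra.mul_mem _ h1 h2
      rwa [Algebra.TensorProduct.tmul_mul_tmul, mul_one, one_mul] at this
  | add x y hx hy => exact Subalgebra.add_mem _ hx hy

/-! ### Kronecker linear maps -/

section Kron
variable {k : Type u} [CommRing k]
variable {α β : Type w} [CommRing α] [CommRing β] [Algebra k α] [Algebra k β]
variable {nA nB : ℕ}

open Matrix in
def stdL (i j : Fin nA) : α →ₗ[k] Matrix (Fin nA) (Fin nA) α where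
  toFun := single i j
  map_add' a b := single_add i j a b
  map_smul' c a := (smul_single c i j a).symm

def projL (I : Type*) (R : Type w) [CommRing R] [Algebra k R] (P Q : I) :
    Matrix I I R →ₗ[k] R where
  toFun M := M P Q
  map_add' _ _ := rfl
  map_smul' _ _ := rfl

def kronLin (k : Type u) [CommRing k] (α β : Type w) [CommRing α] [CommRing β]
    [Algebra k α] [Algebra k β] (nA nB : ℕ) :
    Matrix (Fin nA) (Fin nA) α ⊗[k] Matrix (Fin nB) (Fin nB) β →ₗ[k]
      Matrix (Fin nA × Fin nB) (Fin nA × Fin nB) (α ⊗[k] β) :=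
  TensorProduct.lift (Matrix.kroneckerMapBilinear (TensorProduct.mk k α β))

lemma kronLin_tmul (M : Matrix (Fin nA) (Fin nA) α) (N : Matrix (Fin nB) (Fin nB) β) :
    kronLin k α β nA nB (M ⊗ₜ[k] N) = Matrix.kroneckerTMul k M N := rfl

def invKron : Matrix (Fin nA × Fin nB) (Fin nA × Fin nB) (α ⊗[k] β) →ₗ[k]
    Matrix (Fin nA) (Fin nA) α ⊗[k] Matrix (Fin nB) (Fin nB) β :=
  ∑ P : Fin nA × Fin nB, ∑ Q : Fin nA × Fin nB,
    (TensorProduct.map (stdL P.1 Q.1) (stdL P.2 Q.2)).comp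
      (projL (k := k) (Fin nA × Fin nB) (α ⊗[k] β) P Q)

lemma invKron_comp : (invKron (k := k) (α := α) (β := β) (nA := nA) (nB := nB)).comp
    (kronLin k α β nA nB) = LinearMap.id := by
  apply TensorProduct.ext'
  intro M N
  simp only [LinearMap.comp_apply, LinearMap.id_apply, kronLin_tmul]
  simp only [invKron, LinearMap.sum_apply, LinearMap.comp_apply]
  have : ∀ P Q : Fin nA × Fin nB,
      (TensorProduct.map (stdL (k := k) P.1 Q.1) (stdL P.2 Q.2))
        (projL (k := k) (Fin nA × Fin nB) (α ⊗[k] β) P Q (Matrix.kroneckerTMul k M N)) =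
      (Matrix.single P.1 Q.1 (M P.1 Q.1)) ⊗ₜ[k]
        (Matrix.single P.2 Q.2 (N P.2 Q.2)) := by
    intro P Q
    rfl
  rw [Finset.sum_congr rfl fun P _ => Finset.sum_congr rfl fun Q _ => this P Q]
  simp_rw [Fintype.sum_prod_type]
  calc ∑ p1, ∑ p2, ∑ q1, ∑ q2, (Matrix.single p1 q1 (M p1 q1)) ⊗ₜ[k]
        (Matrix.single p2 q2 (N p2 q2))
      = ∑ p1, ∑ q1, ∑ p2, ∑ q2, (Matrix.single p1 q1 (M p1 q1)) ⊗ₜ[k]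
        (Matrix.single p2 q2 (N p2 q2)) := by
        refine Finset.sum_congr rfl fun p1 _ => ?_
        exact Finset.sum_comm
    _ = ∑ p1, ∑ q1, (Matrix.single p1 q1 (M p1 q1)) ⊗ₜ[k]
        (∑ p2, ∑ q2, Matrix.single p2 q2 (N p2 q2)) := by
        simp_rw [TensorProduct.tmul_sum]
    _ = M ⊗ₜ[k] N := by
        conv_rhs => rw [Matrix.matrix_eq_sum_single M,
          Matrix.matrix_eq_sum_single N]
        simp_rw [TensorProduct.sum_tmul]

lemma kronLin_injective : Function.Injective (kronLin k α β nA nB) := by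
  intro x y h
  simpa using (LinearMap.congr_fun invKron_comp x).symm.trans
    ((congrArg invKron h).trans (LinearMap.congr_fun invKron_comp y))

open Matrix in
lemma kron_std (p1 q1 : Fin nA) (p2 q2 : Fin nB) (u : α) (v : β) :
    Matrix.kroneckerTMul k (single p1 q1 u) (single p2 q2 v) =
      single (p1, p2) (q1, q2) (u ⊗ₜ[k] v) := by
  ext ⟨i1, i2⟩ ⟨j1, j2⟩
  simp only [Matrix.kroneckerTMul, Matrix.kroneckerMap_apply, Matrix.single,
    Matrix.of_apply, Prod.mk.injEq]
  split_ifs <;>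
    simp_all [TensorProduct.tmul_zero, TensorProduct.zero_tmul, Prod.ext_iff] <;> tauto

lemma mul_kronT_mul (M N : Matrix (Fin nA) (Fin nA) α) (M' N' : Matrix (Fin nB) (Fin nB) β) :
    Matrix.kroneckerTMul k (M * N) (M' * N') =
      Matrix.kroneckerTMul k M M' * Matrix.kroneckerTMul k N N' := by
  simp only [Matrix.kroneckerTMul]
  rw [Matrix.mul_kroneckerTMul_mul]

end Kron

/-! ### submodule spans of tensors -/

section Sp
variable {k : Type u} [CommRing k]
variable {A B : Type w} [Ring A] [Ring B] [Algebra k A] [Algebra k B]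

def sp (P : Submodule k A) (Q : Submodule k B) : Submodule k (A ⊗[k] B) :=
  Submodule.span k {x | ∃ a ∈ P, ∃ b ∈ Q, a ⊗ₜ[k] b = x}

lemma tmul_mem_sp {P : Submodule k A} {Q : Submodule k B} {a : A} {b : B}
    (ha : a ∈ P) (hb : b ∈ Q) : a ⊗ₜ[k] b ∈ sp P Q :=
  Submodule.subset_span ⟨a, ha, b, hb, rfl⟩

lemma sp_le {P : Submodule k A} {Q : Submodule k B} {S : Submodule k (A ⊗[k] B)} :
    sp P Q ≤ S ↔ ∀ a ∈ P, ∀ b ∈ Q, a ⊗ₜ[k] b ∈ S := by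
  rw [sp, Submodule.span_le]
  constructor
  · intro h a ha b hb; exact h ⟨a, ha, b, hb, rfl⟩
  · rintro h x ⟨a, ha, b, hb, rfl⟩; exact h a ha b hb

lemma sp_mono {P P' : Submodule k A} {Q Q' : Submodule k B} (h1 : P ≤ P') (h2 : Q ≤ Q') :
    sp P Q ≤ sp P' Q' :=
  sp_le.2 fun a ha b hb => tmul_mem_sp (h1 ha) (h2 hb)

lemma sp_induction {P : Submodule k A} {Q : Submodule k B}
    {motive : A ⊗[k] B → Prop} {x : A ⊗[k] B} (hx : x ∈ sp P Q)
    (mem : ∀ a ∈ P, ∀ b ∈ Q, motive (a ⊗ₜ[k] b))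
    (zero : motive 0)
    (add : ∀ x y, motive x → motive y → motive (x + y))
    (smul : ∀ (c : k) x, motive x → motive (c • x)) : motive x := by
  refine Submodule.span_induction ?_ zero (fun x y _ _ => add x y) (fun c x _ => smul c x) hx
  rintro x ⟨a, ha, b, hb, rfl⟩
  exact mem a ha b hb

lemma sp_bot_left {Q : Submodule k B} : sp (⊥ : Submodule k A) Q = ⊥ := by
  rw [eq_bot_iff, sp_le]
  rintro a ha b -
  rw [Submodule.mem_bot] at ha
  simp [ha]

lemma sp_bot_right {P : Submodule k A} : sp P (⊥ : Submodule k B) = ⊥ := by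
  rw [eq_bot_iff, sp_le]
  rintro a - b hb
  rw [Submodule.mem_bot] at hb
  simp [hb]

lemma sp_top_top : sp (⊤ : Submodule k A) (⊤ : Submodule k B) = ⊤ := by
  rw [eq_top_iff]
  rintro x -
  induction x using TensorProduct.induction_on with
  | zero => exact Submodule.zero_mem _
  | tmul a b => exact tmul_mem_sp trivial trivial
  | add x y hx hy => exact Submodule.add_mem _ hx hy

lemma sp_eq_range (P : Submodule k A) (Q : Submodule k B) :
    sp P Q = LinearMap.range (TensorProduct.map P.subtype Q.subtype) := by
  apply le_antisymm
  · rw [sp_le]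
    intro a ha b hb
    exact ⟨(⟨a, ha⟩ : P) ⊗ₜ[k] (⟨b, hb⟩ : Q), rfl⟩
  · rintro x ⟨z, rfl⟩
    induction z using TensorProduct.induction_on with
    | zero => exact Submodule.zero_mem _
    | tmul a b => exact tmul_mem_sp a.2 b.2
    | add x y hx hy => rw [map_add]; exact Submodule.add_mem _ hx hy

/-- The key kernel computation for one layer of the tensor-product cell chain. -/
lemma ker_step {P0 P1 : Submodule k A} {Q0 Q1 : Submodule k B}
    {MA MB L : Type*} [AddCommGroup MA] [Module k MA] [AddCommGroup MB] [Module k MB]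
    [AddCommGroup L] [Module k L]
    (f : A →ₗ[k] MA) (g : B →ₗ[k] MB) (h : MA ⊗[k] MB →ₗ[k] L)
    (hinj : Function.Injective h)
    (hfsurj : ∀ m : MA, ∃ a ∈ P1, f a = m) (hgsurj : ∀ m : MB, ∃ b ∈ Q1, g b = m)
    (hfker : ∀ a ∈ P1, f a = 0 → a ∈ P0) (hgker : ∀ b ∈ Q1, g b = 0 → b ∈ Q0)
    {v : A ⊗[k] B} (hv : v ∈ sp P1 Q1)
    (hv0 : h ((TensorProduct.map f g) v) = 0) :
    v ∈ sp P0 Q1 ⊔ sp P1 Q0 := by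
  rw [sp_eq_range] at hv
  obtain ⟨z, rfl⟩ := hv
  set f1 : P1 →ₗ[k] MA := f.comp P1.subtype with hf1
  set g1 : Q1 →ₗ[k] MB := g.comp Q1.subtype with hg1
  have hcomp : (TensorProduct.map f g).comp (TensorProduct.map P1.subtype Q1.subtype) =
      TensorProduct.map f1 g1 := by
    rw [← TensorProduct.map_comp]
  have hz0 : TensorProduct.map f1 g1 z = 0 := by
    apply hinj
    rw [map_zero, ← hcomp]
    exact hv0
  have hf1surj : Function.Surjective f1 := by
    intro m
    obtain ⟨a, ha, hfa⟩ := hfsurj m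
    exact ⟨⟨a, ha⟩, hfa⟩
  have hg1surj : Function.Surjective g1 := by
    intro m
    obtain ⟨b, hb, hgb⟩ := hgsurj m
    exact ⟨⟨b, hb⟩, hgb⟩
  have hker := @TensorProduct.map_ker k (LinearMap.ker f1) P1 MA _ _ _ _ _ _ _
    (LinearMap.ker f1).subtype f1
    (LinearMap.exact_subtype_ker_map f1) hf1surj (LinearMap.ker g1) Q1 MB _ _ _ _ _ _
    (LinearMap.ker g1).subtype g1
    (LinearMap.exact_subtype_ker_map g1) hg1surj
  have hzmem : z ∈ LinearMap.range (LinearMap.lTensor P1 (LinearMap.ker g1).subtype) ⊔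
      LinearMap.range (LinearMap.rTensor Q1 (LinearMap.ker f1).subtype) := by
    rw [← hker]; exact hz0
  obtain ⟨z1, hz1, z2, hz2, rfl⟩ := Submodule.mem_sup.1 hzmem
  rw [map_add]
  have claim1 : ∀ w : (P1 ⊗[k] ↥(LinearMap.ker g1)),
      (TensorProduct.map P1.subtype Q1.subtype)
        ((LinearMap.lTensor P1 (LinearMap.ker g1).subtype) w) ∈ sp P1 Q0 := by
    intro w
    induction w using TensorProduct.induction_on with
    | zero => simp
    | tmul a b =>
        simp only [LinearMap.lTensor_tmul, TensorProduct.map_tmul]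
        exact tmul_mem_sp a.2 (hgker _ b.1.2 b.2)
    | add x y hx hy =>
        rw [map_add, map_add]
        exact Submodule.add_mem _ hx hy
  have claim2 : ∀ w : (↥(LinearMap.ker f1) ⊗[k] Q1),
      (TensorProduct.map P1.subtype Q1.subtype)
        ((LinearMap.rTensor Q1 (LinearMap.ker f1).subtype) w) ∈ sp P0 Q1 := by
    intro w
    induction w using TensorProduct.induction_on with
    | zero => simp
    | tmul a b =>
        simp only [LinearMap.rTensor_tmul, TensorProduct.map_tmul]
        exact tmul_mem_sp (hfker _ a.1.2 a.2) b.2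
    | add x y hx hy =>
        rw [map_add, map_add]
        exact Submodule.add_mem _ hx hy
  refine Submodule.add_mem _ ?_ ?_
  · obtain ⟨w, rfl⟩ := hz1
    exact Submodule.mem_sup_right (claim1 w)
  · obtain ⟨w, rfl⟩ := hz2
    exact Submodule.mem_sup_left (claim2 w)

lemma sup_sp_ind {P0 P1 : Submodule k A} {Q0 Q1 : Submodule k B}
    {x : A ⊗[k] B} (hx : x ∈ sp P0 Q0 ⊔ sp P1 Q1)
    {motive : A ⊗[k] B → Prop}
    (mem1 : ∀ a ∈ P0, ∀ b ∈ Q0, motive (a ⊗ₜ[k] b))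
    (mem2 : ∀ a ∈ P1, ∀ b ∈ Q1, motive (a ⊗ₜ[k] b))
    (zero : motive 0)
    (add : ∀ x y, motive x → motive y → motive (x + y))
    (smul : ∀ (c : k) x, motive x → motive (c • x)) : motive x := by
  obtain ⟨u, hu, v, hv, rfl⟩ := Submodule.mem_sup.1 hx
  exact add u v (sp_induction hu mem1 zero add smul) (sp_induction hv mem2 zero add smul)

end Sp

/-! ### the chain construction -/

section Chain

variable {k : Type u} [CommRing k]
variable {A B : Type w} [Ring A] [Ring B] [Algebra k A] [Algebra k B]
variable {iA : A →ₗ[k] A} {iB : B →ₗ[k] B}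

def toSub (I : TwoSidedIdeal A) : Submodule k A :=
  (TwoSidedIdeal.asIdeal I).restrictScalars k

lemma mem_toSub {I : TwoSidedIdeal A} {x : A} : x ∈ toSub (k := k) I ↔ x ∈ I :=
  TwoSidedIdeal.mem_asIdeal

lemma toSub_bot : toSub (k := k) (⊥ : TwoSidedIdeal A) = ⊥ := by
  ext x
  rw [mem_toSub, TwoSidedIdeal.mem_bot, Submodule.mem_bot]

lemma toSub_top : toSub (k := k) (⊤ : TwoSidedIdeal A) = ⊤ := by
  ext x
  simp [mem_toSub]

lemma toSub_mono {I I' : TwoSidedIdeal A} (h : I ≤ I') : toSub (k := k) I ≤ toSub I' :=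
  fun x hx => mem_toSub.2 (h (mem_toSub.1 hx))

variable (cA : AffineCellularChain.{u, w, w} k A iA) (cB : AffineCellularChain.{u, w, w} k B iB)

/-- clamped `J` of `cA`, indexed by `ℕ`. -/
def JAn (r : ℕ) : Submodule k A := toSub (cA.J ⟨min r cA.m, by omega⟩)

def JBn (s : ℕ) : Submodule k B := toSub (cB.J ⟨min s cB.m, by omega⟩)

lemma JAn_eq {r : ℕ} (h : r ≤ cA.m) : JAn cA r = toSub (cA.J ⟨r, by omega⟩) :=
  congrArg (fun i => toSub (cA.J i)) (Fin.ext (min_eq_left h))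

lemma JBn_eq {s : ℕ} (h : s ≤ cB.m) : JBn cB s = toSub (cB.J ⟨s, by omega⟩) :=
  congrArg (fun i => toSub (cB.J i)) (Fin.ext (min_eq_left h))

lemma JAn_mono : Monotone (JAn cA) := by
  intro r r' h
  exact toSub_mono (cA.mono (by simp [Fin.mk_le_mk]; omega))

lemma JBn_mono : Monotone (JBn cB) := by
  intro s s' h
  exact toSub_mono (cB.mono (by simp [Fin.mk_le_mk]; omega))

lemma JAn_zero : JAn cA 0 = ⊥ := by
  rw [JAn_eq cA (Nat.zero_le _)]
  have : (⟨0, by omega⟩ : Fin (cA.m + 1)) = 0 := rfl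
  rw [this, cA.bot, toSub_bot]

lemma JBn_zero : JBn cB 0 = ⊥ := by
  rw [JBn_eq cB (Nat.zero_le _)]
  have : (⟨0, by omega⟩ : Fin (cB.m + 1)) = 0 := rfl
  rw [this, cB.bot, toSub_bot]

lemma JAn_last : JAn cA cA.m = ⊤ := by
  rw [JAn_eq cA le_rfl]
  have : (⟨cA.m, by omega⟩ : Fin (cA.m + 1)) = Fin.last cA.m := rfl
  rw [this, cA.top, toSub_top]

/-- The submodule underlying the `(r, s)`-th ideal of the chain on `A ⊗ B`. -/
def S (r s : ℕ) : Submodule k (A ⊗[k] B) :=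
  sp (JAn cA r) ⊤ ⊔ sp (JAn cA (r + 1)) (JBn cB s)

lemma S_ind {r s : ℕ} {x : A ⊗[k] B} (hx : x ∈ S cA cB r s)
    {motive : A ⊗[k] B → Prop}
    (mem1 : ∀ a ∈ JAn cA r, ∀ b : B, motive (a ⊗ₜ[k] b))
    (mem2 : ∀ a ∈ JAn cA (r + 1), ∀ b ∈ JBn cB s, motive (a ⊗ₜ[k] b))
    (zero : motive 0)
    (add : ∀ x y, motive x → motive y → motive (x + y))
    (smul : ∀ (c : k) x, motive x → motive (c • x)) : motive x := by
  obtain ⟨u, hu, v, hv, rfl⟩ := Submodule.mem_sup.1 hx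
  refine add u v ?_ ?_
  · exact sp_induction hu (fun a ha b _ => mem1 a ha b) zero add smul
  · exact sp_induction hv mem2 zero add smul

lemma S_mul_left {r s : ℕ} {x : A ⊗[k] B} (hx : x ∈ S cA cB r s) :
    ∀ y : A ⊗[k] B, y * x ∈ S cA cB r s := by
  refine S_ind cA cB hx (motive := fun x => ∀ y : A ⊗[k] B, y * x ∈ S cA cB r s) ?_ ?_ ?_ ?_ ?_
  · intro a ha b y
    induction y using TensorProduct.induction_on with
    | zero => rw [zero_mul]; exact Submodule.zero_mem _
    | tmul a' b' =>
        rw [Algebra.TensorProduct.tmul_mul_tmul]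
        exact Submodule.mem_sup_left (tmul_mem_sp
          (mem_toSub.2 (TwoSidedIdeal.mul_mem_left _ _ _ (mem_toSub.1 ha))) trivial)
    | add y1 y2 h1 h2 => rw [add_mul]; exact Submodule.add_mem _ h1 h2
  · intro a ha b hb y
    induction y using TensorProduct.induction_on with
    | zero => rw [zero_mul]; exact Submodule.zero_mem _
    | tmul a' b' =>
        rw [Algebra.TensorProduct.tmul_mul_tmul]
        exact Submodule.mem_sup_right (tmul_mem_sp
          (mem_toSub.2 (TwoSidedIdeal.mul_mem_left _ _ _ (mem_toSub.1 ha)))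
          (mem_toSub.2 (TwoSidedIdeal.mul_mem_left _ _ _ (mem_toSub.1 hb))))
    | add y1 y2 h1 h2 => rw [add_mul]; exact Submodule.add_mem _ h1 h2
  · intro y; rw [mul_zero]; exact Submodule.zero_mem _
  · intro x1 x2 h1 h2 y; rw [mul_add]; exact Submodule.add_mem _ (h1 y) (h2 y)
  · intro c x h y; rw [mul_smul_comm]; exact Submodule.smul_mem _ _ (h y)

lemma S_mul_right {r s : ℕ} {x : A ⊗[k] B} (hx : x ∈ S cA cB r s) :
    ∀ y : A ⊗[k] B, x * y ∈ S cA cB r s := by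
  refine S_ind cA cB hx (motive := fun x => ∀ y : A ⊗[k] B, x * y ∈ S cA cB r s) ?_ ?_ ?_ ?_ ?_
  · intro a ha b y
    induction y using TensorProduct.induction_on with
    | zero => rw [mul_zero]; exact Submodule.zero_mem _
    | tmul a' b' =>
        rw [Algebra.TensorProduct.tmul_mul_tmul]
        exact Submodule.mem_sup_left (tmul_mem_sp
          (mem_toSub.2 (TwoSidedIdeal.mul_mem_right _ _ _ (mem_toSub.1 ha))) trivial)
    | add y1 y2 h1 h2 => rw [mul_add]; exact Submodule.add_mem _ h1 h2
  · intro a ha b hb y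
    induction y using TensorProduct.induction_on with
    | zero => rw [mul_zero]; exact Submodule.zero_mem _
    | tmul a' b' =>
        rw [Algebra.TensorProduct.tmul_mul_tmul]
        exact Submodule.mem_sup_right (tmul_mem_sp
          (mem_toSub.2 (TwoSidedIdeal.mul_mem_right _ _ _ (mem_toSub.1 ha)))
          (mem_toSub.2 (TwoSidedIdeal.mul_mem_right _ _ _ (mem_toSub.1 hb))))
    | add y1 y2 h1 h2 => rw [mul_add]; exact Submodule.add_mem _ h1 h2
  · intro y; rw [zero_mul]; exact Submodule.zero_mem _
  · intro x1 x2 h1 h2 y; rw [add_mul]; exact Submodule.add_mem _ (h1 y) (h2 y)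
  · intro c x h y; rw [smul_mul_assoc]; exact Submodule.smul_mem _ _ (h y)

/-- The `(r, s)`-th two-sided ideal. -/
def SJ (r s : ℕ) : TwoSidedIdeal (A ⊗[k] B) :=
  TwoSidedIdeal.mk' (S cA cB r s)
    (Submodule.zero_mem _)
    (fun hx hy => Submodule.add_mem _ hx hy)
    (fun hx => Submodule.neg_mem _ hx)
    (fun {x y} hy => S_mul_left cA cB hy x)
    (fun {x y} hx => S_mul_right cA cB hx y)

lemma mem_SJ {r s : ℕ} {x : A ⊗[k] B} : x ∈ SJ cA cB r s ↔ x ∈ S cA cB r s :=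
  TwoSidedIdeal.mem_mk' _ _ _ _ _ _ _


lemma S_zero_bot : S cA cB 0 0 = ⊥ := by
  rw [S, JAn_zero, JBn_zero, sp_bot_left, sp_bot_right, sup_bot_eq]

lemma S_step (t : ℕ) :
    S cA cB (t / cB.m) (t % cB.m) ≤ S cA cB ((t + 1) / cB.m) ((t + 1) % cB.m) := by
  rcases Nat.eq_zero_or_pos cB.m with h0 | hpos
  · rw [h0]
    simp only [Nat.div_zero, Nat.mod_zero]
    exact sup_le_sup_left (sp_mono le_rfl (JBn_mono cB (Nat.le_succ t))) _
  · set r := t / cB.m with hr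
    set s := t % cB.m with hsdef
    have hs : s < cB.m := Nat.mod_lt _ hpos
    have ht : cB.m * r + s = t := Nat.div_add_mod t cB.m
    by_cases hcase : s + 1 < cB.m
    · have h1 : t + 1 = cB.m * r + (s + 1) := by omega
      have hdiv : (t + 1) / cB.m = r := by
        rw [h1, Nat.mul_add_div hpos, Nat.div_eq_of_lt hcase, Nat.add_zero]
      have hmod : (t + 1) % cB.m = s + 1 := by
        rw [h1, Nat.mul_add_mod, Nat.mod_eq_of_lt hcase]
      rw [hdiv, hmod]
      exact sup_le_sup_left (sp_mono le_rfl (JBn_mono cB (Nat.le_succ s))) _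
    · have hs1 : s + 1 = cB.m := by omega
      have hmul : cB.m * (r + 1) = cB.m * r + cB.m := by ring
      have h1 : t + 1 = cB.m * (r + 1) := by omega
      have hdiv : (t + 1) / cB.m = r + 1 := by
        rw [h1, Nat.mul_div_cancel_left _ hpos]
      have hmod : (t + 1) % cB.m = 0 := by
        rw [h1, Nat.mul_mod_right]
      rw [hdiv, hmod]
      have hle : S cA cB r s ≤ sp (JAn cA (r + 1)) ⊤ :=
        sup_le (sp_mono (JAn_mono cA (Nat.le_succ r)) le_rfl) (sp_mono le_rfl le_top)
      exact hle.trans le_sup_left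

lemma S_mono_nat : Monotone (fun t => S cA cB (t / cB.m) (t % cB.m)) :=
  monotone_nat_of_le_succ (S_step cA cB)

lemma one_A_eq_zero (h : cA.m = 0) : (1 : A) = 0 := by
  have hlast : Fin.last cA.m = 0 := by ext; simp [h]
  have h1 : (1 : A) ∈ cA.J 0 := by
    rw [← hlast, cA.top]; trivial
  rw [cA.bot] at h1
  exact (TwoSidedIdeal.mem_bot A).1 h1

lemma tensor_trivial (h : cA.m = 0 ∨ cB.m = 0) (x : A ⊗[k] B) : x = 0 := by
  have h1 : (1 : A ⊗[k] B) = 0 := by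
    rcases h with h | h
    · calc (1 : A ⊗[k] B) = 1 ⊗ₜ[k] 1 := Algebra.TensorProduct.one_def
        _ = (0 : A) ⊗ₜ[k] 1 := by rw [one_A_eq_zero cA h]
        _ = 0 := TensorProduct.zero_tmul _ _
    · calc (1 : A ⊗[k] B) = 1 ⊗ₜ[k] 1 := Algebra.TensorProduct.one_def
        _ = 1 ⊗ₜ[k] (0 : B) := by rw [one_A_eq_zero cB h]
        _ = 0 := TensorProduct.tmul_zero _ _
  calc x = x * 1 := (mul_one x).symm
    _ = x * 0 := by rw [h1]
    _ = 0 := mul_zero x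

lemma S_last :
    S cA cB ((cA.m * cB.m) / cB.m) ((cA.m * cB.m) % cB.m) = ⊤ := by
  rcases Nat.eq_zero_or_pos cB.m with h0 | hpos
  · rw [eq_top_iff]
    rintro x -
    rw [tensor_trivial cA cB (Or.inr h0) x]
    exact Submodule.zero_mem _
  · rw [Nat.mul_div_cancel _ hpos, Nat.mul_mod_left]
    rw [eq_top_iff]
    refine le_trans ?_ le_sup_left
    rw [← sp_top_top (k := k) (A := A) (B := B), JAn_last]

lemma S_inv_stable (r s : ℕ) {x : A ⊗[k] B} (hx : x ∈ S cA cB r s) :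
    TensorProduct.map iA iB x ∈ S cA cB r s := by
  refine S_ind cA cB hx (motive := fun x => TensorProduct.map iA iB x ∈ S cA cB r s)
    ?_ ?_ ?_ ?_ ?_
  · intro a ha b
    rw [TensorProduct.map_tmul]
    exact Submodule.mem_sup_left
      (tmul_mem_sp (mem_toSub.2 (cA.inv_stable _ a (mem_toSub.1 ha))) trivial)
  · intro a ha b hb
    rw [TensorProduct.map_tmul]
    exact Submodule.mem_sup_right
      (tmul_mem_sp (mem_toSub.2 (cA.inv_stable _ a (mem_toSub.1 ha)))
        (mem_toSub.2 (cB.inv_stable _ b (mem_toSub.1 hb))))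
  · show TensorProduct.map iA iB 0 ∈ S cA cB r s
    rw [map_zero]; exact Submodule.zero_mem _
  · intro x y hx hy
    show TensorProduct.map iA iB (x + y) ∈ S cA cB r s
    rw [map_add]; exact Submodule.add_mem _ hx hy
  · intro c x hx
    show TensorProduct.map iA iB (c • x) ∈ S cA cB r s
    rw [map_smul]; exact Submodule.smul_mem _ _ hx

end Chain



section Layer

variable {k : Type u} [CommRing k]
variable {A B : Type w} [Ring A] [Ring B] [Algebra k A] [Algebra k B]
variable {iA : A →ₗ[k] A} {iB : B →ₗ[k] B}
variable (cA : AffineCellularChain.{u, w, w} k A iA) (cB : AffineCellularChain.{u, w, w} k B iB)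

def eT : Fin (cA.m * cB.m) ≃ Fin cA.m × Fin cB.m :=
  (finProdFinEquiv (m := cA.m) (n := cB.m)).symm

def rF (l : Fin (cA.m * cB.m)) : Fin cA.m := (eT cA cB l).1

def sF (l : Fin (cA.m * cB.m)) : Fin cB.m := (eT cA cB l).2

lemma rF_val (l : Fin (cA.m * cB.m)) : (rF cA cB l : ℕ) = (l : ℕ) / cB.m := rfl

lemma sF_val (l : Fin (cA.m * cB.m)) : (sF cA cB l : ℕ) = (l : ℕ) % cB.m := rfl

def layerT (l : Fin (cA.m * cB.m)) : AffAlgWithInvolution.{u, w} k where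
  carrier := (cA.layer (rF cA cB l)).carrier ⊗[k] (cB.layer (sF cA cB l)).carrier
  affine := ftTensor (cA.layer (rF cA cB l)).affine (cB.layer (sF cA cB l)).affine
  σ := Algebra.TensorProduct.map (cA.layer (rF cA cB l)).σ (cB.layer (sF cA cB l)).σ
  σ_invol := by
    intro b
    induction b using TensorProduct.induction_on with
    | zero => simp
    | tmul u v =>
        simp [Algebra.TensorProduct.map_tmul, AffAlgWithInvolution.σ_invol]
    | add x y hx hy => rw [map_add, map_add, hx, hy]

def nlT (l : Fin (cA.m * cB.m)) : ℕ := cA.nl (rF cA cB l) * cB.nl (sF cA cB l)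

def idxT (l : Fin (cA.m * cB.m)) :
    Fin (nlT cA cB l) ≃ Fin (cA.nl (rF cA cB l)) × Fin (cB.nl (sF cA cB l)) :=
  (finProdFinEquiv (m := cA.nl (rF cA cB l)) (n := cB.nl (sF cA cB l))).symm

def ΨT (l : Fin (cA.m * cB.m)) :
    Matrix (Fin (nlT cA cB l)) (Fin (nlT cA cB l)) ((layerT cA cB l).carrier) :=
  (Matrix.kroneckerTMul k (cA.Ψ (rF cA cB l)) (cB.Ψ (sF cA cB l))).submatrix
    (idxT cA cB l) (idxT cA cB l)

lemma ΨT_def (l : Fin (cA.m * cB.m)) : ΨT cA cB l =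
    (Matrix.kroneckerTMul k (cA.Ψ (rF cA cB l)) (cB.Ψ (sF cA cB l))).submatrix
      (idxT cA cB l) (idxT cA cB l) := rfl

def hKL (l : Fin (cA.m * cB.m)) :
    Matrix (Fin (cA.nl (rF cA cB l))) (Fin (cA.nl (rF cA cB l))) (cA.layer (rF cA cB l)).carrier
      ⊗[k] Matrix (Fin (cB.nl (sF cA cB l))) (Fin (cB.nl (sF cA cB l)))
        (cB.layer (sF cA cB l)).carrier →ₗ[k]
    Matrix (Fin (nlT cA cB l)) (Fin (nlT cA cB l)) ((layerT cA cB l).carrier) :=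
  (Matrix.reindexLinearEquiv k ((layerT cA cB l).carrier) finProdFinEquiv
    finProdFinEquiv).toLinearMap ∘ₗ
    kronLin k (cA.layer (rF cA cB l)).carrier (cB.layer (sF cA cB l)).carrier
      (cA.nl (rF cA cB l)) (cB.nl (sF cA cB l))

lemma hKL_injective (l : Fin (cA.m * cB.m)) : Function.Injective (hKL cA cB l) := by
  intro x y h
  exact kronLin_injective
    ((Matrix.reindexLinearEquiv k ((layerT cA cB l).carrier) finProdFinEquiv
      finProdFinEquiv).injective h)

def φT (l : Fin (cA.m * cB.m)) :
    A ⊗[k] B →ₗ[k] Matrix (Fin (nlT cA cB l)) (Fin (nlT cA cB l)) ((layerT cA cB l).carrier) :=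
  (hKL cA cB l) ∘ₗ TensorProduct.map (cA.φ (rF cA cB l)) (cB.φ (sF cA cB l))

lemma φT_tmul (l : Fin (cA.m * cB.m)) (a : A) (b : B) :
    φT cA cB l (a ⊗ₜ[k] b) =
      (Matrix.kroneckerTMul k (cA.φ (rF cA cB l) a) (cB.φ (sF cA cB l) b)).submatrix
        (idxT cA cB l) (idxT cA cB l) := rfl

def Plo (l : Fin (cA.m * cB.m)) : Submodule k A := toSub (cA.J (rF cA cB l).castSucc)
def Phi (l : Fin (cA.m * cB.m)) : Submodule k A := toSub (cA.J (rF cA cB l).succ)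
def Qlo (l : Fin (cA.m * cB.m)) : Submodule k B := toSub (cB.J (sF cA cB l).castSucc)
def Qhi (l : Fin (cA.m * cB.m)) : Submodule k B := toSub (cB.J (sF cA cB l).succ)

def Slo (l : Fin (cA.m * cB.m)) : Submodule k (A ⊗[k] B) :=
  sp (Plo cA cB l) ⊤ ⊔ sp (Phi cA cB l) (Qlo cA cB l)

def Shi (l : Fin (cA.m * cB.m)) : Submodule k (A ⊗[k] B) :=
  sp (Plo cA cB l) ⊤ ⊔ sp (Phi cA cB l) (Qhi cA cB l)

lemma mB_pos (l : Fin (cA.m * cB.m)) : 0 < cB.m := by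
  rcases Nat.eq_zero_or_pos cB.m with h | h
  · exact absurd l.isLt (by simp [h])
  · exact h

lemma r_lt (l : Fin (cA.m * cB.m)) : (l : ℕ) / cB.m < cA.m :=
  (Nat.div_lt_iff_lt_mul (mB_pos cA cB l)).2 l.isLt

lemma bridge_lo (l : Fin (cA.m * cB.m)) :
    S cA cB ((l.castSucc : ℕ) / cB.m) ((l.castSucc : ℕ) % cB.m) = Slo cA cB l := by
  have hr := r_lt cA cB l
  have hs : (l : ℕ) % cB.m < cB.m := Nat.mod_lt _ (mB_pos cA cB l)
  show S cA cB ((l : ℕ) / cB.m) ((l : ℕ) % cB.m) = Slo cA cB l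
  rw [S, JAn_eq cA (le_of_lt hr), JAn_eq cA hr, JBn_eq cB (le_of_lt hs)]
  rfl

lemma bridge_hi (l : Fin (cA.m * cB.m)) :
    S cA cB ((l.succ : ℕ) / cB.m) ((l.succ : ℕ) % cB.m) = Shi cA cB l := by
  have hmB := mB_pos cA cB l
  have hr := r_lt cA cB l
  set r := (l : ℕ) / cB.m with hrdef
  set s := (l : ℕ) % cB.m with hsdef
  have hs : s < cB.m := Nat.mod_lt _ hmB
  have ht : cB.m * r + s = (l : ℕ) := Nat.div_add_mod _ _
  have hsucc : (l.succ : ℕ) = (l : ℕ) + 1 := rfl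
  by_cases hcase : s + 1 < cB.m
  · have h1 : (l : ℕ) + 1 = cB.m * r + (s + 1) := by omega
    have hdiv : ((l : ℕ) + 1) / cB.m = r := by
      rw [h1, Nat.mul_add_div hmB, Nat.div_eq_of_lt hcase, Nat.add_zero]
    have hmod : ((l : ℕ) + 1) % cB.m = s + 1 := by
      rw [h1, Nat.mul_add_mod, Nat.mod_eq_of_lt hcase]
    rw [hsucc, hdiv, hmod, S, JAn_eq cA (le_of_lt hr), JAn_eq cA hr, JBn_eq cB hcase.le]
    rfl
  · have hs1 : s + 1 = cB.m := by omega
    have hmul : cB.m * (r + 1) = cB.m * r + cB.m := by ring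
    have h1 : (l : ℕ) + 1 = cB.m * (r + 1) := by omega
    have hdiv : ((l : ℕ) + 1) / cB.m = r + 1 := by
      rw [h1, Nat.mul_div_cancel_left _ hmB]
    have hmod : ((l : ℕ) + 1) % cB.m = 0 := by rw [h1, Nat.mul_mod_right]
    rw [hsucc, hdiv, hmod, S, JBn_zero, sp_bot_right, sup_bot_eq, JAn_eq cA hr]
    have hQ : Qhi cA cB l = ⊤ := by
      have hlast : (sF cA cB l).succ = Fin.last cB.m := by
        ext
        rw [Fin.val_succ, sF_val, Fin.val_last]
        omega
      rw [Qhi, hlast, cB.top, toSub_top]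
    have habs : sp (Plo cA cB l) (⊤ : Submodule k B) ≤ sp (Phi cA cB l) ⊤ :=
      sp_mono (toSub_mono (cA.mono (Fin.castSucc_le_succ _))) le_rfl
    rw [Shi, hQ, sup_eq_right.2 habs]
    rfl

lemma φA_zero (l : Fin (cA.m * cB.m)) {a : A} (ha : a ∈ Plo cA cB l) :
    cA.φ (rF cA cB l) a = 0 :=
  (cA.φ_ker _ a (cA.mono (Fin.castSucc_le_succ _) (mem_toSub.1 ha))).2 (mem_toSub.1 ha)

lemma φB_zero (l : Fin (cA.m * cB.m)) {b : B} (hb : b ∈ Qlo cA cB l) :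
    cB.φ (sF cA cB l) b = 0 :=
  (cB.φ_ker _ b (cB.mono (Fin.castSucc_le_succ _) (mem_toSub.1 hb))).2 (mem_toSub.1 hb)

lemma φT_lo_zero (l : Fin (cA.m * cB.m)) {x : A ⊗[k] B} (hx : x ∈ Slo cA cB l) :
    φT cA cB l x = 0 := by
  refine sup_sp_ind hx (motive := fun x => φT cA cB l x = 0) ?_ ?_ ?_ ?_ ?_
  · intro a ha b _
    rw [φT_tmul, φA_zero cA cB l ha]
    simp; rfl
  · intro a _ b hb
    rw [φT_tmul, φB_zero cA cB l hb]
    simp; rfl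
  · exact map_zero _
  · intro x y hx hy
    rw [map_add, hx, hy, add_zero]
  · intro c x hx
    rw [map_smul, hx, smul_zero]

lemma φT_mul (l : Fin (cA.m * cB.m)) {x : A ⊗[k] B} (hx : x ∈ Shi cA cB l) :
    ∀ y ∈ Shi cA cB l, φT cA cB l (x * y) =
      φT cA cB l x * ΨT cA cB l * φT cA cB l y := by
  refine sup_sp_ind hx (motive := fun x => ∀ y ∈ Shi cA cB l,
    φT cA cB l (x * y) = φT cA cB l x * ΨT cA cB l * φT cA cB l y) ?_ ?_ ?_ ?_ ?_
  · -- x = a ⊗ b with a in the lower ideal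
    intro a ha b hb y hy
    clear hy hb
    have h1 : φT cA cB l (a ⊗ₜ[k] b) = 0 :=
      φT_lo_zero cA cB l (Submodule.mem_sup_left (tmul_mem_sp ha trivial))
    rw [h1, Matrix.zero_mul, Matrix.zero_mul]
    induction y using TensorProduct.induction_on with
    | zero => rw [mul_zero, map_zero]
    | tmul a' b' =>
        rw [Algebra.TensorProduct.tmul_mul_tmul, φT_tmul]
        have : cA.φ (rF cA cB l) (a * a') = 0 :=
          φA_zero cA cB l (mem_toSub.2 (TwoSidedIdeal.mul_mem_right _ _ _ (mem_toSub.1 ha)))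
        rw [this]
        simp; rfl
    | add y1 y2 hy1 hy2 => rw [mul_add, map_add, hy1, hy2, add_zero]
  · -- x = a ⊗ b with a ∈ Phi, b ∈ Qhi
    intro a ha b hb y hy
    refine sup_sp_ind hy (motive := fun y => φT cA cB l ((a ⊗ₜ[k] b) * y) =
      φT cA cB l (a ⊗ₜ[k] b) * ΨT cA cB l * φT cA cB l y) ?_ ?_ ?_ ?_ ?_
    · intro a' ha' b' hb'
      have h1 : φT cA cB l (a' ⊗ₜ[k] b') = 0 :=
        φT_lo_zero cA cB l (Submodule.mem_sup_left (tmul_mem_sp ha' trivial))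
      rw [h1, Matrix.mul_zero]
      rw [Algebra.TensorProduct.tmul_mul_tmul, φT_tmul]
      have : cA.φ (rF cA cB l) (a * a') = 0 :=
        φA_zero cA cB l (mem_toSub.2 (TwoSidedIdeal.mul_mem_left _ _ _ (mem_toSub.1 ha')))
      rw [this]
      simp; rfl
    · intro a' ha' b' hb'
      rw [Algebra.TensorProduct.tmul_mul_tmul, φT_tmul, φT_tmul, φT_tmul,
        cA.φ_mul (rF cA cB l) a (mem_toSub.1 ha) a' (mem_toSub.1 ha'),
        cB.φ_mul (sF cA cB l) b (mem_toSub.1 hb) b' (mem_toSub.1 hb'),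
        mul_kronT_mul, mul_kronT_mul, ΨT_def]
      exact ((congrArg (· * _) (Matrix.submatrix_mul_equiv _ _ (idxT cA cB l) (idxT cA cB l)
        (idxT cA cB l))).trans
        (Matrix.submatrix_mul_equiv _ _ (idxT cA cB l) (idxT cA cB l) (idxT cA cB l))).symm
    · show φT cA cB l ((a ⊗ₜ[k] b) * 0) =
        φT cA cB l (a ⊗ₜ[k] b) * ΨT cA cB l * φT cA cB l 0
      rw [mul_zero, map_zero, Matrix.mul_zero]
    · intro y1 y2 hy1 hy2
      show φT cA cB l ((a ⊗ₜ[k] b) * (y1 + y2)) =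
        φT cA cB l (a ⊗ₜ[k] b) * ΨT cA cB l * φT cA cB l (y1 + y2)
      rw [mul_add, map_add, map_add, Matrix.mul_add, hy1, hy2]
    · intro c y hy
      show φT cA cB l ((a ⊗ₜ[k] b) * (c • y)) =
        φT cA cB l (a ⊗ₜ[k] b) * ΨT cA cB l * φT cA cB l (c • y)
      rw [mul_smul_comm, map_smul, map_smul, Matrix.mul_smul, hy]
  · intro y _
    rw [zero_mul, map_zero, Matrix.zero_mul, Matrix.zero_mul]
  · intro x1 x2 h1 h2 y hy
    rw [add_mul, map_add, map_add, h1 y hy, h2 y hy, Matrix.add_mul, Matrix.add_mul]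
  · intro c x h y hy
    rw [smul_mul_assoc, map_smul, map_smul, h y hy, Matrix.smul_mul, Matrix.smul_mul]

lemma φT_inv (l : Fin (cA.m * cB.m)) {x : A ⊗[k] B} (hx : x ∈ Shi cA cB l) :
    φT cA cB l (TensorProduct.map iA iB x) =
      ((φT cA cB l x).transpose).map ((layerT cA cB l).σ) := by
  refine sup_sp_ind hx (motive := fun x => φT cA cB l (TensorProduct.map iA iB x) =
    ((φT cA cB l x).transpose).map ((layerT cA cB l).σ)) ?_ ?_ ?_ ?_ ?_
  · intro a ha b _
    rw [TensorProduct.map_tmul, φT_tmul, φT_tmul]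
    have h1 : cA.φ (rF cA cB l) (iA a) = 0 :=
      φA_zero cA cB l (mem_toSub.2 (cA.inv_stable _ a (mem_toSub.1 ha)))
    have h2 : cA.φ (rF cA cB l) a = 0 := φA_zero cA cB l ha
    rw [h1, h2]
    ext p q
    simp [Matrix.map_apply]
    exact (map_zero _).symm
  · intro a ha b hb
    rw [TensorProduct.map_tmul, φT_tmul, φT_tmul,
      cA.φ_inv (rF cA cB l) a (mem_toSub.1 ha), cB.φ_inv (sF cA cB l) b (mem_toSub.1 hb)]
    ext p q
    simp [Matrix.map_apply, Matrix.transpose_apply, Matrix.submatrix_apply,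
      Matrix.kroneckerTMul, Matrix.kroneckerMap_apply, layerT,
      Algebra.TensorProduct.map_tmul]
    exact (Algebra.TensorProduct.map_tmul _ _ _ _).symm
  · show φT cA cB l (TensorProduct.map iA iB 0) =
      ((φT cA cB l 0).transpose).map ((layerT cA cB l).σ)
    rw [map_zero, map_zero]
    ext p q
    simp [Matrix.map_apply]
  · intro x y hx hy
    show φT cA cB l (TensorProduct.map iA iB (x + y)) =
      ((φT cA cB l (x + y)).transpose).map ((layerT cA cB l).σ)
    rw [map_add, map_add, map_add, hx, hy]
    ext p q
    simp [Matrix.map_apply, Matrix.transpose_apply]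
  · intro c x hx
    show φT cA cB l (TensorProduct.map iA iB (c • x)) =
      ((φT cA cB l (c • x)).transpose).map ((layerT cA cB l).σ)
    rw [map_smul, map_smul, map_smul, hx]
    ext p q
    simp [Matrix.map_apply, Matrix.transpose_apply]

lemma ΨT_sym (l : Fin (cA.m * cB.m)) :
    ((ΨT cA cB l).transpose).map ((layerT cA cB l).σ) = ΨT cA cB l := by
  ext p q
  have hA : (cA.Ψ (rF cA cB l)) ((idxT cA cB l p).1) ((idxT cA cB l q).1) =
      (cA.layer (rF cA cB l)).σ ((cA.Ψ (rF cA cB l)) ((idxT cA cB l q).1) ((idxT cA cB l p).1)) := by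
    conv_lhs => rw [← cA.Ψ_sym (rF cA cB l)]
    rfl
  have hB : (cB.Ψ (sF cA cB l)) ((idxT cA cB l p).2) ((idxT cA cB l q).2) =
      (cB.layer (sF cA cB l)).σ ((cB.Ψ (sF cA cB l)) ((idxT cA cB l q).2) ((idxT cA cB l p).2)) := by
    conv_lhs => rw [← cB.Ψ_sym (sF cA cB l)]
    rfl
  show (layerT cA cB l).σ ((ΨT cA cB l) q p) = (ΨT cA cB l) p q
  rw [show (ΨT cA cB l) q p = (cA.Ψ (rF cA cB l)) ((idxT cA cB l q).1) ((idxT cA cB l p).1)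
    ⊗ₜ[k] (cB.Ψ (sF cA cB l)) ((idxT cA cB l q).2) ((idxT cA cB l p).2) from rfl,
    show (ΨT cA cB l) p q = (cA.Ψ (rF cA cB l)) ((idxT cA cB l p).1) ((idxT cA cB l q).1)
    ⊗ₜ[k] (cB.Ψ (sF cA cB l)) ((idxT cA cB l p).2) ((idxT cA cB l q).2) from rfl]
  show (Algebra.TensorProduct.map (cA.layer (rF cA cB l)).σ (cB.layer (sF cA cB l)).σ) _ = _
  rw [Algebra.TensorProduct.map_tmul, ← hA, ← hB]

open Matrix in
lemma submatrix_std {n : ℕ} {I : Type*} [DecidableEq I] {C : Type w} [CommRing C]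
    (e : Fin n ≃ I) (p q : Fin n) (c : C) :
    (single (e p) (e q) c).submatrix ⇑e ⇑e = single p q c := by
  ext i j
  simp [Matrix.submatrix_apply, Matrix.single, Equiv.apply_eq_iff_eq]

lemma φT_surj (l : Fin (cA.m * cB.m))
    (M : Matrix (Fin (nlT cA cB l)) (Fin (nlT cA cB l)) ((layerT cA cB l).carrier)) :
    ∃ x ∈ Shi cA cB l, φT cA cB l x = M := by
  have hadd : ∀ M N : Matrix (Fin (nlT cA cB l)) (Fin (nlT cA cB l)) ((layerT cA cB l).carrier),
      (∃ x ∈ Shi cA cB l, φT cA cB l x = M) → (∃ x ∈ Shi cA cB l, φT cA cB l x = N) →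
      ∃ x ∈ Shi cA cB l, φT cA cB l x = M + N := by
    rintro M N ⟨x, hx, rfl⟩ ⟨y, hy, rfl⟩
    exact ⟨x + y, Submodule.add_mem _ hx hy, map_add _ _ _⟩
  have h0 : ∃ x ∈ Shi cA cB l, φT cA cB l x = 0 :=
    ⟨0, Submodule.zero_mem _, map_zero _⟩
  have hgen : ∀ (p q : Fin (nlT cA cB l)) (u : (cA.layer (rF cA cB l)).carrier)
      (v : (cB.layer (sF cA cB l)).carrier),
      ∃ x ∈ Shi cA cB l, φT cA cB l x = Matrix.single p q (u ⊗ₜ[k] v) := by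
    intro p q u v
    obtain ⟨a, haJ, hφa⟩ := cA.φ_surj (rF cA cB l)
      (Matrix.single (idxT cA cB l p).1 (idxT cA cB l q).1 u)
    obtain ⟨b, hbJ, hφb⟩ := cB.φ_surj (sF cA cB l)
      (Matrix.single (idxT cA cB l p).2 (idxT cA cB l q).2 v)
    refine ⟨a ⊗ₜ[k] b,
      Submodule.mem_sup_right (tmul_mem_sp (mem_toSub.2 haJ) (mem_toSub.2 hbJ)), ?_⟩
    rw [φT_tmul, hφa, hφb, kron_std]
    exact submatrix_std (idxT cA cB l) p q (u ⊗ₜ[k] v)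
  have hentry : ∀ (p q : Fin (nlT cA cB l)) (c : (layerT cA cB l).carrier),
      ∃ x ∈ Shi cA cB l, φT cA cB l x = Matrix.single p q c := by
    intro p q c
    induction c using TensorProduct.induction_on with
    | zero =>
        obtain ⟨x, hx, hx0⟩ := h0
        exact ⟨x, hx, hx0.trans (Matrix.single_zero p q).symm⟩
    | tmul u v => exact hgen p q u v
    | add c1 c2 h1 h2 =>
        obtain ⟨x, hx, hx0⟩ := hadd _ _ h1 h2
        exact ⟨x, hx, hx0.trans (Matrix.single_add p q c1 c2).symm⟩
  rw [Matrix.matrix_eq_sum_single M]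
  refine Finset.sum_induction _ (fun N => ∃ x ∈ Shi cA cB l, φT cA cB l x = N) hadd h0 ?_
  intro p _
  refine Finset.sum_induction _ (fun N => ∃ x ∈ Shi cA cB l, φT cA cB l x = N) hadd h0 ?_
  intro q _
  exact hentry p q (M p q)

lemma φT_ker (l : Fin (cA.m * cB.m)) {x : A ⊗[k] B} (hx : x ∈ Shi cA cB l)
    (h0 : φT cA cB l x = 0) : x ∈ Slo cA cB l := by
  obtain ⟨u, hu, v, hv, rfl⟩ := Submodule.mem_sup.1 hx
  have huz : φT cA cB l u = 0 :=
    φT_lo_zero cA cB l (Submodule.mem_sup_left hu)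
  have hvz : φT cA cB l v = 0 := by
    have := map_add (φT cA cB l) u v
    rw [h0] at this
    rw [huz] at this
    -- this : 0 = 0 + φT v
    have := this.symm
    rwa [zero_add] at this
  have hvmem : v ∈ sp (Plo cA cB l) (Qhi cA cB l) ⊔ sp (Phi cA cB l) (Qlo cA cB l) := by
    refine ker_step (cA.φ (rF cA cB l)) (cB.φ (sF cA cB l)) (hKL cA cB l)
      (hKL_injective cA cB l) ?_ ?_ ?_ ?_ hv ?_
    · intro m
      obtain ⟨a, haJ, hφa⟩ := cA.φ_surj (rF cA cB l) m
      exact ⟨a, mem_toSub.2 haJ, hφa⟩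
    · intro m
      obtain ⟨b, hbJ, hφb⟩ := cB.φ_surj (sF cA cB l) m
      exact ⟨b, mem_toSub.2 hbJ, hφb⟩
    · intro a ha h
      exact mem_toSub.2 ((cA.φ_ker _ a (mem_toSub.1 ha)).1 h)
    · intro b hb h
      exact mem_toSub.2 ((cB.φ_ker _ b (mem_toSub.1 hb)).1 h)
    · exact hvz
  refine Submodule.add_mem _ (Submodule.mem_sup_left hu) ?_
  rcases Submodule.mem_sup.1 hvmem with ⟨v1, hv1, v2, hv2, rfl⟩
  refine Submodule.add_mem _ ?_ (Submodule.mem_sup_right hv2)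
  exact Submodule.mem_sup_left (sp_mono le_rfl le_top hv1)

end Layer

section Assemble

variable {k : Type u} [CommRing k]
variable {A B : Type w} [Ring A] [Ring B] [Algebra k A] [Algebra k B]
variable {iA : A →ₗ[k] A} {iB : B →ₗ[k] B}
variable (cA : AffineCellularChain.{u, w, w} k A iA) (cB : AffineCellularChain.{u, w, w} k B iB)

def chainT : AffineCellularChain.{u, w, w} k (A ⊗[k] B) (TensorProduct.map iA iB) where
  m := cA.m * cB.m
  J := fun t => SJ cA cB ((t : ℕ) / cB.m) ((t : ℕ) % cB.m)
  mono := by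
    intro t t' h
    have hnat : (t : ℕ) ≤ (t' : ℕ) := h
    intro x hx
    rw [mem_SJ] at hx ⊢
    exact S_mono_nat cA cB hnat hx
  bot := by
    apply SetLike.ext
    intro x
    rw [TwoSidedIdeal.mem_bot, mem_SJ]
    have h1 : ((0 : Fin (cA.m * cB.m + 1)) : ℕ) = 0 := rfl
    rw [h1, Nat.zero_div, Nat.zero_mod, S_zero_bot, Submodule.mem_bot]
  top := by
    apply SetLike.ext
    intro x
    rw [mem_SJ]
    have h1 : ((Fin.last (cA.m * cB.m)) : ℕ) = cA.m * cB.m := rfl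
    rw [h1, S_last]
    simp
  inv_stable := by
    intro t x hx
    rw [mem_SJ] at hx ⊢
    exact S_inv_stable cA cB _ _ hx
  nl := nlT cA cB
  layer := layerT cA cB
  Ψ := ΨT cA cB
  Ψ_sym := ΨT_sym cA cB
  φ := φT cA cB
  φ_mul := by
    intro l x hx y hy
    rw [mem_SJ, bridge_hi] at hx hy
    exact φT_mul cA cB l hx y hy
  φ_ker := by
    intro l x hx
    rw [mem_SJ, bridge_hi] at hx
    rw [mem_SJ, bridge_lo]
    exact ⟨fun h0 => φT_ker cA cB l hx h0, fun hlo => φT_lo_zero cA cB l hlo⟩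
  φ_surj := by
    intro l M
    obtain ⟨x, hx, hφ⟩ := φT_surj cA cB l M
    refine ⟨x, ?_, hφ⟩
    rw [mem_SJ, bridge_hi]
    exact hx
  φ_inv := by
    intro l x hx
    rw [mem_SJ, bridge_hi] at hx
    exact φT_inv cA cB l hx

end Assemble



end

end Stmt2Aux

theorem stmt_2 (k : Type u) [CommRing k] [IsDomain k] [IsNoetherianRing k]
    (A : Type w) [Ring A] [Algebra k A] (B : Type w) [Ring B] [Algebra k B]
    (iA : A →ₗ[k] A) (hiA : IsInvolution iA) (iB : B →ₗ[k] B) (hiB : IsInvolution iB)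
    (cA : AffineCellularChain.{u, w, w} k A iA) (cB : AffineCellularChain.{u, w, w} k B iB) :
    IsInvolution (TensorProduct.map iA iB) ∧
    ∃ c : AffineCellularChain.{u, w, w} k (A ⊗[k] B) (TensorProduct.map iA iB),
      c.m = cA.m * cB.m ∧
      ∃ e : Fin c.m ≃ Fin cA.m × Fin cB.m,
        ∀ l : Fin c.m,
          c.nl l = cA.nl (e l).1 * cB.nl (e l).2 ∧
          ∃ (f : (c.layer l).carrier ≃ₐ[k]
                ((cA.layer (e l).1).carrier ⊗[k] (cB.layer (e l).2).carrier))
            (idx : Fin (c.nl l) ≃ Fin (cA.nl (e l).1) × Fin (cB.nl (e l).2)),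
            (∀ b, f ((c.layer l).σ b) =
              (TensorProduct.map ((cA.layer (e l).1).σ : _ →ₗ[k] _)
                ((cB.layer (e l).2).σ : _ →ₗ[k] _)) (f b)) ∧
            ∀ p q, f (c.Ψ l p q) =
              (cA.Ψ (e l).1 (idx p).1 (idx q).1) ⊗ₜ[k] (cB.Ψ (e l).2 (idx p).2 (idx q).2) := by
  constructor
  · constructor
    · intro x y
      induction x using TensorProduct.induction_on with
      | zero => simp
      | tmul a b =>
          induction y using TensorProduct.induction_on with
          | zero => simp
          | tmul a' b' =>
              rw [Algebra.TensorProduct.tmul_mul_tmul, TensorProduct.map_tmul,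
                TensorProduct.map_tmul, TensorProduct.map_tmul, hiA.1, hiB.1,
                Algebra.TensorProduct.tmul_mul_tmul]
          | add y1 y2 h1 h2 =>
              rw [mul_add, map_add, h1, h2, map_add, add_mul]
      | add x1 x2 h1 h2 =>
          rw [add_mul, map_add, h1, h2, map_add, mul_add]
    · intro x
      induction x using TensorProduct.induction_on with
      | zero => simp
      | tmul a b =>
          rw [TensorProduct.map_tmul, TensorProduct.map_tmul, hiA.2, hiB.2]
      | add x y h1 h2 => rw [map_add, map_add, h1, h2]
  · refine ⟨Stmt2Aux.chainT cA cB, rfl, Stmt2Aux.eT cA cB, ?_⟩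
    intro l
    refine ⟨rfl, AlgEquiv.refl, Stmt2Aux.idxT cA cB l, ?_, ?_⟩
    · intro b
      show (Stmt2Aux.layerT cA cB l).σ b = _
      induction b using TensorProduct.induction_on with
      | zero => exact (map_zero _).trans (map_zero _).symm
      | tmul u v => rfl
      | add y1 y2 h1 h2 =>
          exact ((map_add _ y1 y2).trans (congrArg₂ (· + ·) h1 h2)).trans (map_add _ _ _).symm
    · intro p q
      rfl
end

section
/- Let λ be an n-tuple of r-th roots of unity and let λ⁰ be the dominant representative of its S_n-orbit. Choose a sequence of simple reflections s_1,...,s_k with λ⁰ = s_1 s_2 ⋯ s_k λ and such that each partial application changes the tuple: s_j ⋯ s_k λ ≠ s_{j+1} ⋯ s_k λ for all j. Set τ_λ = g_{s_1} g_{s_2} ⋯ g_{s_k} and τ'_λ = g_{s_k} ⋯ g_{s_2} g_{s_1} in Ĥ_{r,n}. Then 1_{λ⁰} τ_λ τ'_λ = 1_{λ⁰} and 1_λ τ'_λ τ_λ = 1_λ. -/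
/-!
STATEMENT 12: Let `λ` be an `n`-tuple of `r`-th roots of unity and `λ⁰` the dominant
representative of its `S_n`-orbit.  Choose simple reflections `s_1,…,s_k` with
`λ⁰ = s_1 s_2 ⋯ s_k λ` such that each partial application changes the tuple.  Set
`τ_λ = g_{s_1} ⋯ g_{s_k}` and `τ'_λ = g_{s_k} ⋯ g_{s_1}` in `Ĥ_{r,n}`.  Then
`1_{λ⁰} τ_λ τ'_λ = 1_{λ⁰}` and `1_λ τ'_λ τ_λ = 1_λ`.

Setup: `Ĥ_{r,n}` is presented over `𝒜 = ℤ[q,q⁻¹] = LaurentPolynomial ℤ` as in Statement 8.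
Tuples are functions `Fin n → Fin r`; `s_i` acts by `λ ↦ λ ∘ (i, i+1)`; dominance of `λ⁰`
means that equal entries are grouped in weakly increasing order, i.e. `λ⁰` is monotone.
-/

/-- The ground ring `𝒜 = ℤ[q,q⁻¹]`. -/
abbrev LA : Type := LaurentPolynomial ℤ

noncomputable abbrev qq : LA := LaurentPolynomial.T 1
noncomputable abbrev qqinv : LA := LaurentPolynomial.T (-1)

section

variable (r n : ℕ)

inductive HhatGen (r n : ℕ) : Type
  | g : Fin (n - 1) → HhatGen r n
  | e : (Fin n → Fin r) → HhatGen r n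
  | x : HhatGen r n
  | xinv : HhatGen r n

def Hlo {n : ℕ} (i : Fin (n - 1)) : Fin n := ⟨i.val, by omega⟩
def Hhi {n : ℕ} (i : Fin (n - 1)) : Fin n := ⟨i.val + 1, by omega⟩
def Hswap {n : ℕ} (i : Fin (n - 1)) : Equiv.Perm (Fin n) := Equiv.swap (Hlo i) (Hhi i)

open FreeAlgebra in
inductive HhatRel : FreeAlgebra LA (HhatGen r n) → FreeAlgebra LA (HhatGen r n) → Prop
  | gg (i j : Fin (n - 1)) (hij : i.val + 2 ≤ j.val ∨ j.val + 2 ≤ i.val) :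
      HhatRel (ι LA (HhatGen.g i) * ι LA (HhatGen.g j)) (ι LA (HhatGen.g j) * ι LA (HhatGen.g i))
  | braid (i j : Fin (n - 1)) (hij : j.val = i.val + 1) :
      HhatRel (ι LA (HhatGen.g i) * ι LA (HhatGen.g j) * ι LA (HhatGen.g i))
        (ι LA (HhatGen.g j) * ι LA (HhatGen.g i) * ι LA (HhatGen.g j))
  | ge (i : Fin (n - 1)) (lam : Fin n → Fin r) :
      HhatRel (ι LA (HhatGen.g i) * ι LA (HhatGen.e lam))
        (ι LA (HhatGen.e (lam ∘ (Hswap i))) * ι LA (HhatGen.g i))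
  | sum_e : HhatRel (∑ lam : Fin n → Fin r, ι LA (HhatGen.e lam)) 1
  | orth (lam lam' : Fin n → Fin r) :
      HhatRel (ι LA (HhatGen.e lam) * ι LA (HhatGen.e lam'))
        (if lam = lam' then ι LA (HhatGen.e lam) else 0)
  | quad (i : Fin (n - 1)) :
      HhatRel (ι LA (HhatGen.g i) ^ 2)
        (1 + (qq - qqinv) •
          ∑ lam ∈ Finset.univ.filter (fun lam : Fin n → Fin r => lam ∘ (Hswap i) = lam),
            ι LA (HhatGen.g i) * ι LA (HhatGen.e lam))
  | x_xinv : HhatRel (ι LA (HhatGen.x (r := r) (n := n)) * ι LA HhatGen.xinv) 1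
  | xinv_x : HhatRel (ι LA (HhatGen.xinv (r := r) (n := n)) * ι LA HhatGen.x) 1
  | gxgx (i : Fin (n - 1)) (hi : i.val = 0) :
      HhatRel (ι LA (HhatGen.g i) * ι LA HhatGen.x * ι LA (HhatGen.g i) * ι LA HhatGen.x)
        (ι LA HhatGen.x * ι LA (HhatGen.g i) * ι LA HhatGen.x * ι LA (HhatGen.g i))
  | gx (i : Fin (n - 1)) (hi : 1 ≤ i.val) :
      HhatRel (ι LA (HhatGen.g i) * ι LA HhatGen.x) (ι LA HhatGen.x * ι LA (HhatGen.g i))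
  | xe (lam : Fin n → Fin r) :
      HhatRel (ι LA HhatGen.x * ι LA (HhatGen.e lam)) (ι LA (HhatGen.e lam) * ι LA HhatGen.x)

noncomputable abbrev HhatYH := RingQuot (HhatRel r n)

noncomputable def Hg (i : Fin (n - 1)) : HhatYH r n :=
  RingQuot.mkAlgHom LA _ (FreeAlgebra.ι LA (HhatGen.g i))

noncomputable def He (lam : Fin n → Fin r) : HhatYH r n :=
  RingQuot.mkAlgHom LA _ (FreeAlgebra.ι LA (HhatGen.e lam))

/-- `applyChain [s_1,…,s_k] λ = s_1 s_2 ⋯ s_k λ` (each `s_i` acting by permuting the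
entries of the tuple). -/
def applyChain {r n : ℕ} : List (Fin (n - 1)) → (Fin n → Fin r) → (Fin n → Fin r)
  | [], lam => lam
  | i :: t, lam => (applyChain t lam) ∘ (Hswap i)

end

section AuxProof
variable {r n : ℕ}

lemma Hswap_comp (i : Fin (n - 1)) (lam : Fin n → Fin r) :
    (lam ∘ Hswap i) ∘ Hswap i = lam := by
  funext x
  simp [Function.comp, Hswap, Equiv.swap_apply_self]

lemma Hrel {a b : FreeAlgebra LA (HhatGen r n)} (h : HhatRel r n a b) :
    RingQuot.mkAlgHom LA (HhatRel r n) a = RingQuot.mkAlgHom LA (HhatRel r n) b :=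
  RingQuot.mkAlgHom_rel LA h

lemma Hg_mul_He (i : Fin (n - 1)) (lam : Fin n → Fin r) :
    Hg r n i * He r n lam = He r n (lam ∘ Hswap i) * Hg r n i := by
  have := Hrel (HhatRel.ge i lam)
  simpa [Hg, He, map_mul] using this

lemma He_mul_Hg (i : Fin (n - 1)) (lam : Fin n → Fin r) :
    He r n lam * Hg r n i = Hg r n i * He r n (lam ∘ Hswap i) := by
  rw [Hg_mul_He, Hswap_comp]

lemma He_mul_He (lam lam' : Fin n → Fin r) :
    He r n lam * He r n lam' = if lam = lam' then He r n lam else 0 := by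
  have := Hrel (HhatRel.orth lam lam')
  split_ifs with h
  · simpa [He, map_mul, h] using this
  · simpa [He, map_mul, h] using this

lemma Hg_sq (i : Fin (n - 1)) :
    Hg r n i * Hg r n i = 1 + (qq - qqinv) •
      ∑ lam ∈ Finset.univ.filter (fun lam : Fin n → Fin r => lam ∘ (Hswap i) = lam),
        Hg r n i * He r n lam := by
  have := Hrel (HhatRel.quad (r := r) i)
  simpa [Hg, He, map_mul, map_add, map_sum, sq] using this

lemma Hkey (i : Fin (n - 1)) (lam : Fin n → Fin r) (h : lam ∘ Hswap i ≠ lam) :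
    Hg r n i * He r n lam * Hg r n i = He r n (lam ∘ Hswap i) := by
  rw [Hg_mul_He, mul_assoc, Hg_sq, mul_add, mul_one, mul_smul_comm, Finset.mul_sum]
  have hz : ∀ nu ∈ Finset.univ.filter (fun nu : Fin n → Fin r => nu ∘ (Hswap i) = nu),
      He r n (lam ∘ Hswap i) * (Hg r n i * He r n nu) = 0 := by
    intro nu hnu
    rw [Finset.mem_filter] at hnu
    have hne : lam ≠ nu := by
      rintro rfl
      exact h hnu.2
    rw [← mul_assoc, ← Hg_mul_He i lam, mul_assoc, He_mul_He,
      if_neg hne, mul_zero]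
  rw [Finset.sum_congr rfl hz]
  simp

lemma He_mul_prodRev (lam : Fin n → Fin r) (ss : List (Fin (n - 1))) :
    He r n lam * ((ss.reverse.map (Hg r n)).prod) =
      ((ss.reverse.map (Hg r n)).prod) * He r n (applyChain ss lam) := by
  induction ss generalizing lam with
  | nil => simp [applyChain]
  | cons i t ih =>
      simp only [List.reverse_cons, List.map_append, List.prod_append, List.map_cons,
        List.map_nil, List.prod_cons, List.prod_nil, mul_one, applyChain]
      rw [← mul_assoc, ih lam, mul_assoc, He_mul_Hg, ← mul_assoc]

lemma Hmain (lam : Fin n → Fin r) (ss : List (Fin (n - 1)))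
    (hstep : ∀ j < ss.length,
      applyChain (ss.drop j) lam ≠ applyChain (ss.drop (j + 1)) lam) :
    He r n (applyChain ss lam) * ((ss.map (Hg r n)).prod) *
        ((ss.reverse.map (Hg r n)).prod) = He r n (applyChain ss lam) ∧
    He r n lam * ((ss.reverse.map (Hg r n)).prod) * ((ss.map (Hg r n)).prod) =
      He r n lam := by
  induction ss with
  | nil => simp
  | cons i t ih =>
      have hstep' : ∀ j < t.length,
          applyChain (t.drop j) lam ≠ applyChain (t.drop (j + 1)) lam := by
        intro j hj
        exact hstep (j + 1) (by simpa using Nat.succ_lt_succ hj)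
      obtain ⟨ih1, ih2⟩ := ih hstep'
      have h0 : applyChain t lam ∘ Hswap i ≠ applyChain t lam := by
        have := hstep 0 (by simp)
        simpa [applyChain] using this
      constructor
      · simp only [List.map_cons, List.prod_cons, List.reverse_cons, List.map_append,
          List.prod_append, List.map_nil, List.prod_nil, mul_one, applyChain]
        have : He r n (applyChain t lam ∘ Hswap i) * Hg r n i =
            Hg r n i * He r n (applyChain t lam) := by
          rw [He_mul_Hg, Hswap_comp]
        calc He r n (applyChain t lam ∘ Hswap i) * (Hg r n i * (t.map (Hg r n)).prod) *
              ((t.reverse.map (Hg r n)).prod * Hg r n i)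
            = (He r n (applyChain t lam ∘ Hswap i) * Hg r n i) *
                ((t.map (Hg r n)).prod * ((t.reverse.map (Hg r n)).prod * Hg r n i)) := by
              simp only [mul_assoc]
          _ = (Hg r n i * He r n (applyChain t lam)) *
                ((t.map (Hg r n)).prod * ((t.reverse.map (Hg r n)).prod * Hg r n i)) := by
              rw [this]
          _ = Hg r n i * (He r n (applyChain t lam) * (t.map (Hg r n)).prod *
                (t.reverse.map (Hg r n)).prod) * Hg r n i := by simp only [mul_assoc]
          _ = Hg r n i * He r n (applyChain t lam) * Hg r n i := by rw [ih1]
          _ = He r n (applyChain t lam ∘ Hswap i) := Hkey i _ h0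
      · simp only [List.map_cons, List.prod_cons, List.reverse_cons, List.map_append,
          List.prod_append, List.map_nil, List.prod_nil, mul_one, applyChain]
        have heq : He r n lam * (t.reverse.map (Hg r n)).prod =
            (t.reverse.map (Hg r n)).prod * He r n (applyChain t lam) :=
          He_mul_prodRev lam t
        have hkey : Hg r n i * (He r n (applyChain t lam ∘ Hswap i)) * Hg r n i =
            He r n (applyChain t lam) := by
          have := Hkey i (applyChain t lam ∘ Hswap i) (by rw [Hswap_comp]; exact fun hh => h0 hh.symm)
          rwa [Hswap_comp] at this
        calc He r n lam * ((t.reverse.map (Hg r n)).prod * Hg r n i) *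
              (Hg r n i * (t.map (Hg r n)).prod)
            = (He r n lam * (t.reverse.map (Hg r n)).prod) *
                (Hg r n i * (Hg r n i * (t.map (Hg r n)).prod)) := by simp only [mul_assoc]
          _ = ((t.reverse.map (Hg r n)).prod * He r n (applyChain t lam)) *
                (Hg r n i * (Hg r n i * (t.map (Hg r n)).prod)) := by rw [heq]
          _ = (t.reverse.map (Hg r n)).prod *
                ((He r n (applyChain t lam) * Hg r n i) *
                  (Hg r n i * (t.map (Hg r n)).prod)) := by simp only [mul_assoc]
          _ = (t.reverse.map (Hg r n)).prod *
                ((Hg r n i * He r n (applyChain t lam ∘ Hswap i) * Hg r n i) *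
                  (t.map (Hg r n)).prod) := by
              rw [He_mul_Hg]; simp only [mul_assoc]
          _ = (t.reverse.map (Hg r n)).prod *
                (He r n (applyChain t lam) * (t.map (Hg r n)).prod) := by rw [hkey]
          _ = ((t.reverse.map (Hg r n)).prod * He r n (applyChain t lam)) *
                (t.map (Hg r n)).prod := by simp only [mul_assoc]
          _ = He r n lam * (t.reverse.map (Hg r n)).prod * (t.map (Hg r n)).prod := by
              rw [← heq]
          _ = He r n lam := ih2

end AuxProof

theorem stmt_12 (r n : ℕ) (hr : 1 ≤ r) (hn : 1 ≤ n)
    (lam lam0 : Fin n → Fin r) (hdom : Monotone lam0)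
    (ss : List (Fin (n - 1)))
    (hchain : applyChain ss lam = lam0)
    (hstep : ∀ j < ss.length,
      applyChain (ss.drop j) lam ≠ applyChain (ss.drop (j + 1)) lam) :
    He r n lam0 * ((ss.map (Hg r n)).prod) * ((ss.reverse.map (Hg r n)).prod) =
      He r n lam0 ∧
    He r n lam * ((ss.reverse.map (Hg r n)).prod) * ((ss.map (Hg r n)).prod) =
      He r n lam := by
  subst hchain
  exact Hmain lam ss hstep
end

section
/- Let Ψ: Ĥ_{r,n} → Ê_{r,n} be the algebra isomorphism given by Ψ(h)_{λ₁,λ₂} = τ_{λ₁} 1_{λ₁} h 1_{λ₂} τ'_{λ₂}. Then for any triple (λ₁, λ₂, ŵ) with λ₁⁰ = λ₂⁰ and ŵ ∈ Ŵ_{λ₁⁰}, we have Ψ(τ'_{λ₁} 1_{λ₁⁰} c_{ŵ,λ₁⁰} 1_{λ₂⁰} τ_{λ₂}) = c^{λ₁,λ₂;ŵ}, where c_{ŵ,λ₁⁰} is the Kazhdan-Lusztig basis element of 1_{λ₁⁰} Ĥ_{r,n} 1_{λ₁⁰} and c^{λ₁,λ₂;ŵ} is the corresponding canonical basis element of Ê_{r,n}.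 -/
/-!
STATEMENT 16: Let `Ψ : Ĥ_{r,n} → Ê_{r,n}` be the algebra isomorphism
`Ψ(h)_{λ₁,λ₂} = τ_{λ₁} 1_{λ₁} h 1_{λ₂} τ'_{λ₂}`.  Then for any triple `(λ₁, λ₂, ŵ)` with
`λ₁⁰ = λ₂⁰` and `ŵ ∈ Ŵ_{λ₁⁰}`, we have
`Ψ(τ'_{λ₁} 1_{λ₁⁰} c_{ŵ,λ₁⁰} 1_{λ₂⁰} τ_{λ₂}) = c^{λ₁,λ₂;ŵ}`.

Setup: `Ĥ_{r,n}` and `Ψ` as in Statement 13.  The corner algebra `1_{λ⁰} Ĥ_{r,n} 1_{λ⁰}`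
has the basis `{g_{ŵ,λ⁰}}_{ŵ ∈ Ŵ_{λ⁰}}` (encoded by an abstract index type `W` and a
family `gfam` of elements of the corner) and a bar involution `bar`; the Kazhdan–Lusztig
element `c_{ŵ,λ⁰}` is the unique bar-invariant element congruent to `g_{ŵ,λ⁰}` modulo
`q⁻¹ℤ[q⁻¹]`-combinations of the other `g_{ŷ,λ⁰}` (the submodule `Aneg`).  Likewise
`Ê_{r,n}` has the basis `x^{λ₁,λ₂;ŵ}` (supported in the single entry `(λ₁,λ₂)`, value
`g_{ŵ,λ⁰}`), the entrywise bar involution, and `c^{λ₁,λ₂;ŵ}` is the unique bar-invariant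
element congruent to `x^{λ₁,λ₂;ŵ}`; this characterization is recorded by the predicate
`klPropE` together with the uniqueness hypothesis `huniq`.
-/

open scoped Classical

/-- The coefficient submodule `q⁻¹ ℤ[q⁻¹] ⊆ 𝒜`. -/
noncomputable def Aneg : Submodule ℤ LA :=
  Submodule.span ℤ {a : LA | ∃ m : ℕ, 1 ≤ m ∧ a = LaurentPolynomial.T (-(m : ℤ))}

section

variable (r n : ℕ)

def sameOrbit {r n : ℕ} (l1 l2 : Fin n → Fin r) : Prop :=
  ∃ σ : Equiv.Perm (Fin n), l2 = l1 ∘ σ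

noncomputable def tauP (chains : (Fin n → Fin r) → List (Fin (n - 1)))
    (lam : Fin n → Fin r) : HhatYH r n :=
  ((chains lam).map (Hg r n)).prod

noncomputable def tauP' (chains : (Fin n → Fin r) → List (Fin (n - 1)))
    (lam : Fin n → Fin r) : HhatYH r n :=
  ((chains lam).reverse.map (Hg r n)).prod

/-- `Ψ(h)_{λ₁,λ₂} = τ_{λ₁} 1_{λ₁} h 1_{λ₂} τ'_{λ₂}`. -/
noncomputable def ΨM (chains : (Fin n → Fin r) → List (Fin (n - 1))) (h : HhatYH r n)
    (l1 l2 : Fin n → Fin r) : HhatYH r n :=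
  if sameOrbit l1 l2 then
    tauP r n chains l1 * He r n l1 * h * He r n l2 * tauP' r n chains l2
  else 0

variable {W : Type}

/-- The characterizing property of the canonical basis element `c^{λ₁,λ₂;ŵ}` of `Ê_{r,n}`:
entrywise bar-invariance, and congruence to `x^{λ₁,λ₂;ŵ}` modulo `q⁻¹ℤ[q⁻¹]`-combinations
of the `x^{λ₁,λ₂;ŷ}`, `ŷ ≠ ŵ`. -/
noncomputable def klPropE (bar : HhatYH r n →+ HhatYH r n) (gfam : W → HhatYH r n) (wh : W)
    (l1 l2 : Fin n → Fin r) (z : (Fin n → Fin r) → (Fin n → Fin r) → HhatYH r n) : Prop :=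
  (∀ m1 m2, bar (z m1 m2) = z m1 m2) ∧
  ∃ c : W →₀ LA, (∀ y ∈ c.support, y ≠ wh ∧ c y ∈ Aneg) ∧
    ∀ m1 m2, z m1 m2 =
      if m1 = l1 ∧ m2 = l2 then gfam wh + ∑ y ∈ c.support, c y • gfam y else 0

end

namespace Stmt16Aux

variable (r n : ℕ)

lemma rel_eq {x y : FreeAlgebra LA (HhatGen r n)} (h : HhatRel r n x y) :
    RingQuot.mkAlgHom LA (HhatRel r n) x = RingQuot.mkAlgHom LA (HhatRel r n) y :=
  RingQuot.mkAlgHom_rel LA h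

lemma ge_eq (i : Fin (n - 1)) (lam : Fin n → Fin r) :
    Hg r n i * He r n lam = He r n (lam ∘ Hswap i) * Hg r n i := by
  have h := rel_eq r n (HhatRel.ge i lam)
  simpa [Hg, He, map_mul] using h

lemma comp_swap_swap (μ : Fin n → Fin r) (i : Fin (n - 1)) :
    (μ ∘ Hswap i) ∘ Hswap i = μ := by
  funext x
  simp [Hswap, Function.comp, Equiv.swap_apply_self]

lemma He_mul_g (μ : Fin n → Fin r) (i : Fin (n - 1)) :
    He r n μ * Hg r n i = Hg r n i * He r n (μ ∘ Hswap i) := by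
  have h := ge_eq r n i (μ ∘ Hswap i)
  rw [comp_swap_swap] at h
  exact h.symm

lemma orth_eq (lam lam' : Fin n → Fin r) :
    He r n lam * He r n lam' = if lam = lam' then He r n lam else 0 := by
  have h := rel_eq r n (HhatRel.orth lam lam')
  by_cases hll : lam = lam'
  · subst hll
    simpa [He, map_mul] using h
  · rw [if_neg hll] at h ⊢
    simpa [He, map_mul] using h

lemma He_self (lam : Fin n → Fin r) : He r n lam * He r n lam = He r n lam := by
  simp [orth_eq]

lemma gg_He (i : Fin (n - 1)) (μ : Fin n → Fin r) (hμ : μ ∘ Hswap i ≠ μ) :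
    Hg r n i * Hg r n i * He r n μ = He r n μ := by
  have hq := rel_eq r n (HhatRel.quad (r := r) (n := n) i)
  have h1 : Hg r n i * Hg r n i = 1 + (qq - qqinv) •
      ∑ lam ∈ Finset.univ.filter (fun lam : Fin n → Fin r => lam ∘ (Hswap i) = lam),
        Hg r n i * He r n lam := by
    simpa [Hg, He, map_mul, map_add, map_one, map_sum, sq] using hq
  rw [h1, add_mul, one_mul, smul_mul_assoc, Finset.sum_mul]
  have hz : ∀ lam ∈ Finset.univ.filter (fun lam : Fin n → Fin r => lam ∘ (Hswap i) = lam),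
      Hg r n i * He r n lam * He r n μ = 0 := by
    intro lam hlam
    rw [Finset.mem_filter] at hlam
    have hne : lam ≠ μ := by rintro rfl; exact hμ hlam.2
    rw [mul_assoc, orth_eq, if_neg hne, mul_zero]
  rw [Finset.sum_eq_zero hz, smul_zero, add_zero]

noncomputable def prodG (L : List (Fin (n - 1))) : HhatYH r n := (L.map (Hg r n)).prod

lemma tauP_eq (chains : (Fin n → Fin r) → List (Fin (n - 1))) (lam : Fin n → Fin r) :
    tauP r n chains lam = prodG r n (chains lam) := rfl

lemma tauP'_eq (chains : (Fin n → Fin r) → List (Fin (n - 1))) (lam : Fin n → Fin r) :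
    tauP' r n chains lam = prodG r n (chains lam).reverse := rfl

lemma prodG_nil : prodG r n [] = 1 := rfl

lemma prodG_cons (i : Fin (n - 1)) (t : List (Fin (n - 1))) :
    prodG r n (i :: t) = Hg r n i * prodG r n t := by
  simp [prodG]

lemma prodG_cons_rev (i : Fin (n - 1)) (t : List (Fin (n - 1))) :
    prodG r n (i :: t).reverse = prodG r n t.reverse * Hg r n i := by
  simp [prodG]

-- Lemma A
lemma prodG_He (L : List (Fin (n - 1))) (μ : Fin n → Fin r) :
    prodG r n L * He r n μ = He r n (applyChain L μ) * prodG r n L := by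
  induction L with
  | nil => simp [prodG_nil, applyChain]
  | cons i t ih =>
    rw [prodG_cons, applyChain, mul_assoc, ih, ← mul_assoc, ge_eq, mul_assoc]

-- Lemma B
lemma He_prodG_rev (L : List (Fin (n - 1))) (μ : Fin n → Fin r) :
    He r n μ * prodG r n L.reverse = prodG r n L.reverse * He r n (applyChain L μ) := by
  induction L with
  | nil => simp [prodG_nil, applyChain]
  | cons i t ih =>
    rw [prodG_cons_rev, applyChain, ← mul_assoc, ih, mul_assoc, He_mul_g, ← mul_assoc]

lemma g_He_g (i : Fin (n - 1)) (ν : Fin n → Fin r) (hν : ν ∘ Hswap i ≠ ν) :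
    Hg r n i * He r n ν * Hg r n i = He r n (ν ∘ Hswap i) := by
  rw [mul_assoc, He_mul_g, ← mul_assoc, gg_He]
  rw [comp_swap_swap]
  exact fun h => hν h.symm

-- Lemma C
lemma key_left (L : List (Fin (n - 1))) (μ : Fin n → Fin r)
    (hs : ∀ j < L.length, applyChain (L.drop j) μ ≠ applyChain (L.drop (j + 1)) μ) :
    prodG r n L * prodG r n L.reverse * He r n (applyChain L μ) =
      He r n (applyChain L μ) := by
  induction L with
  | nil => simp [prodG_nil, applyChain]
  | cons i t ih =>
    have h0 : applyChain t μ ∘ Hswap i ≠ applyChain t μ := by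
      have := hs 0 (by simp)
      simpa [applyChain] using this
    have ih' := ih (fun j hj => by
      have := hs (j + 1) (by simpa using Nat.succ_lt_succ hj)
      simpa using this)
    rw [prodG_cons, prodG_cons_rev, applyChain]
    calc Hg r n i * prodG r n t * (prodG r n t.reverse * Hg r n i) *
          He r n (applyChain t μ ∘ Hswap i)
        = Hg r n i * (prodG r n t * prodG r n t.reverse) *
            (Hg r n i * He r n (applyChain t μ ∘ Hswap i)) := by
          simp only [mul_assoc]
      _ = Hg r n i * (prodG r n t * prodG r n t.reverse) *
            (He r n (applyChain t μ) * Hg r n i) := by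
          rw [ge_eq, comp_swap_swap]
      _ = Hg r n i * (prodG r n t * prodG r n t.reverse * He r n (applyChain t μ)) *
            Hg r n i := by simp only [mul_assoc]
      _ = Hg r n i * He r n (applyChain t μ) * Hg r n i := by rw [ih']
      _ = He r n (applyChain t μ ∘ Hswap i) := g_He_g r n i _ h0

-- Lemma D
lemma key_right (L : List (Fin (n - 1))) (μ : Fin n → Fin r)
    (hs : ∀ j < L.length, applyChain (L.drop j) μ ≠ applyChain (L.drop (j + 1)) μ) :
    He r n (applyChain L μ) * (prodG r n L * prodG r n L.reverse) =
      He r n (applyChain L μ) := by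
  induction L with
  | nil => simp [prodG_nil, applyChain]
  | cons i t ih =>
    have h0 : applyChain t μ ∘ Hswap i ≠ applyChain t μ := by
      have := hs 0 (by simp)
      simpa [applyChain] using this
    have ih' := ih (fun j hj => by
      have := hs (j + 1) (by simpa using Nat.succ_lt_succ hj)
      simpa using this)
    rw [prodG_cons, prodG_cons_rev, applyChain]
    calc He r n (applyChain t μ ∘ Hswap i) *
          (Hg r n i * prodG r n t * (prodG r n t.reverse * Hg r n i))
        = He r n (applyChain t μ ∘ Hswap i) * Hg r n i *
            (prodG r n t * prodG r n t.reverse) * Hg r n i := by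
          simp only [mul_assoc]
      _ = Hg r n i * He r n (applyChain t μ) *
            (prodG r n t * prodG r n t.reverse) * Hg r n i := by
          rw [He_mul_g, comp_swap_swap]
      _ = Hg r n i * (He r n (applyChain t μ) *
            (prodG r n t * prodG r n t.reverse)) * Hg r n i := by
          simp only [mul_assoc]
      _ = Hg r n i * He r n (applyChain t μ) * Hg r n i := by rw [ih']
      _ = He r n (applyChain t μ ∘ Hswap i) := g_He_g r n i _ h0

lemma applyChain_inj (L : List (Fin (n - 1))) :
    Function.Injective (applyChain (r := r) (n := n) L) := by
  induction L with
  | nil => exact fun a b h => h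
  | cons i t ih =>
    intro a b h
    apply ih
    have h2 : (applyChain t a ∘ Hswap i) ∘ Hswap i
        = (applyChain t b ∘ Hswap i) ∘ Hswap i := by
      show (applyChain (i :: t) a) ∘ _ = (applyChain (i :: t) b) ∘ _
      rw [h]
    rwa [comp_swap_swap, comp_swap_swap] at h2

lemma massoc2 {a b c d x : HhatYH r n} (h : a * b = c * d) :
    a * (b * x) = c * (d * x) := by rw [← mul_assoc, h, mul_assoc]

lemma mar {a b c x : HhatYH r n} (h : a * b = c) : a * (b * x) = c * x := by
  rw [← mul_assoc, h]

lemma massoc3 {a b c e x : HhatYH r n} (h : a * b * c = e) :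
    a * (b * (c * x)) = e * x := by rw [← mul_assoc, ← mul_assoc, h]

end Stmt16Aux

theorem stmt_16 (r n : ℕ) (hr : 1 ≤ r) (hn : 1 ≤ n)
    (dom : (Fin n → Fin r) → (Fin n → Fin r))
    (hdom_mono : ∀ lam, Monotone (dom lam))
    (hdom_orbit : ∀ l1 l2, sameOrbit l1 l2 → dom l1 = dom l2)
    (chains : (Fin n → Fin r) → List (Fin (n - 1)))
    (hchain : ∀ lam, applyChain (chains lam) lam = dom lam)
    (hstep : ∀ lam, ∀ j < (chains lam).length,
      applyChain ((chains lam).drop j) lam ≠ applyChain ((chains lam).drop (j + 1)) lam)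
    (l1 l2 : Fin n → Fin r) (horb : sameOrbit l1 l2) (lam0 : Fin n → Fin r)
    (hlam0 : dom l1 = lam0)
    -- the basis `{g_{ŵ,λ⁰}}_{ŵ ∈ Ŵ_{λ⁰}}` of the corner algebra `1_{λ⁰} Ĥ_{r,n} 1_{λ⁰}`:
    (W : Type) (gfam : W → HhatYH r n)
    (hcorner : ∀ w, He r n lam0 * gfam w * He r n lam0 = gfam w)
    -- the bar involution:
    (bar : HhatYH r n →+ HhatYH r n)
    -- the Kazhdan–Lusztig basis element `c_{ŵ,λ⁰}` of the corner algebra: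
    (wh : W) (cW : HhatYH r n)
    (hcW_bar : bar cW = cW)
    (hcW_congr : ∃ c : W →₀ LA, (∀ y ∈ c.support, y ≠ wh ∧ c y ∈ Aneg) ∧
      cW = gfam wh + ∑ y ∈ c.support, c y • gfam y)
    -- the canonical basis element `c^{λ₁,λ₂;ŵ}` of `Ê_{r,n}` and its uniqueness:
    (cE : (Fin n → Fin r) → (Fin n → Fin r) → HhatYH r n)
    (hcE : klPropE r n bar gfam wh l1 l2 cE)
    (huniq : ∀ z, klPropE r n bar gfam wh l1 l2 z → z = cE) :
    ∀ m1 m2,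
      ΨM r n chains
        (tauP' r n chains l1 * He r n lam0 * cW * He r n lam0 * tauP r n chains l2)
        m1 m2 = cE m1 m2 := by
  classical
  have hdom2 : dom l2 = lam0 := by rw [← hdom_orbit l1 l2 horb, hlam0]
  have hA1 : applyChain (chains l1) l1 = lam0 := by rw [hchain, hlam0]
  have hA2 : applyChain (chains l2) l2 = lam0 := by rw [hchain, hdom2]
  have hcorn : He r n lam0 * cW * He r n lam0 = cW := by
    obtain ⟨c, hc, hcw⟩ := hcW_congr
    rw [hcw]
    simp only [mul_add, add_mul, Finset.mul_sum, Finset.sum_mul, mul_smul_comm,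
      smul_mul_assoc, hcorner]
  have hval : ∀ m1 m2,
      ΨM r n chains (tauP' r n chains l1 * He r n lam0 * cW * He r n lam0 *
        tauP r n chains l2) m1 m2 = if m1 = l1 ∧ m2 = l2 then cW else 0 := by
    intro m1 m2
    by_cases horb' : sameOrbit m1 m2
    · rw [ΨM, if_pos horb']
      simp only [Stmt16Aux.tauP_eq, Stmt16Aux.tauP'_eq]
      by_cases h1 : m1 = l1
      · by_cases h2 : m2 = l2
        · subst h1; subst h2
          rw [if_pos ⟨rfl, rfl⟩]
          have hB1 : He r n m1 * Stmt16Aux.prodG r n (chains m1).reverse =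
              Stmt16Aux.prodG r n (chains m1).reverse * He r n lam0 := by
            rw [Stmt16Aux.He_prodG_rev, hA1]
          have hA2' : Stmt16Aux.prodG r n (chains m2) * He r n m2 =
              He r n lam0 * Stmt16Aux.prodG r n (chains m2) := by
            rw [Stmt16Aux.prodG_He, hA2]
          have hKL : Stmt16Aux.prodG r n (chains m1) *
              Stmt16Aux.prodG r n (chains m1).reverse * He r n lam0 = He r n lam0 := by
            rw [← hA1]
            exact Stmt16Aux.key_left r n (chains m1) m1 (hstep m1)
          have hKR : He r n lam0 * (Stmt16Aux.prodG r n (chains m2) *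
              Stmt16Aux.prodG r n (chains m2).reverse) = He r n lam0 := by
            rw [← hA2]
            exact Stmt16Aux.key_right r n (chains m2) m2 (hstep m2)
          calc Stmt16Aux.prodG r n (chains m1) * He r n m1 *
                (Stmt16Aux.prodG r n (chains m1).reverse * He r n lam0 * cW * He r n lam0 *
                  Stmt16Aux.prodG r n (chains m2)) * He r n m2 *
                Stmt16Aux.prodG r n (chains m2).reverse
              = Stmt16Aux.prodG r n (chains m1) * (He r n m1 *
                  (Stmt16Aux.prodG r n (chains m1).reverse * (He r n lam0 * (cW *
                  (He r n lam0 * (Stmt16Aux.prodG r n (chains m2) * (He r n m2 *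
                  Stmt16Aux.prodG r n (chains m2).reverse))))))) := by
                simp only [mul_assoc]
            _ = Stmt16Aux.prodG r n (chains m1) *
                  (Stmt16Aux.prodG r n (chains m1).reverse * (He r n lam0 * (He r n lam0 * (cW *
                  (He r n lam0 * (Stmt16Aux.prodG r n (chains m2) * (He r n m2 *
                  Stmt16Aux.prodG r n (chains m2).reverse))))))) := by
                rw [Stmt16Aux.massoc2 r n hB1]
            _ = Stmt16Aux.prodG r n (chains m1) *
                  (Stmt16Aux.prodG r n (chains m1).reverse * (He r n lam0 * (cW *
                  (He r n lam0 * (Stmt16Aux.prodG r n (chains m2) * (He r n m2 *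
                  Stmt16Aux.prodG r n (chains m2).reverse)))))) := by
                rw [Stmt16Aux.mar r n (Stmt16Aux.He_self r n lam0)]
            _ = Stmt16Aux.prodG r n (chains m1) *
                  (Stmt16Aux.prodG r n (chains m1).reverse * (He r n lam0 * (cW *
                  (He r n lam0 * (He r n lam0 * (Stmt16Aux.prodG r n (chains m2) *
                  Stmt16Aux.prodG r n (chains m2).reverse)))))) := by
                rw [Stmt16Aux.massoc2 r n hA2']
            _ = Stmt16Aux.prodG r n (chains m1) *
                  (Stmt16Aux.prodG r n (chains m1).reverse * (He r n lam0 * (cW *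
                  (He r n lam0 * (Stmt16Aux.prodG r n (chains m2) *
                  Stmt16Aux.prodG r n (chains m2).reverse))))) := by
                rw [Stmt16Aux.mar r n (Stmt16Aux.He_self r n lam0)]
            _ = Stmt16Aux.prodG r n (chains m1) *
                  (Stmt16Aux.prodG r n (chains m1).reverse * (He r n lam0 * (cW *
                  He r n lam0))) := by rw [hKR]
            _ = He r n lam0 * (cW * He r n lam0) := Stmt16Aux.massoc3 r n hKL
            _ = cW := by rw [← mul_assoc, hcorn]
        · rw [if_neg (fun h => h2 h.2)]
          have hne : lam0 ≠ applyChain (chains l2) m2 := by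
            rw [← hA2]
            exact fun h => h2 (Stmt16Aux.applyChain_inj r n (chains l2) h).symm
          have hA2' : Stmt16Aux.prodG r n (chains l2) * He r n m2 =
              He r n (applyChain (chains l2) m2) * Stmt16Aux.prodG r n (chains l2) := by
            rw [Stmt16Aux.prodG_He]
          have hz : He r n lam0 * He r n (applyChain (chains l2) m2) = 0 := by
            rw [Stmt16Aux.orth_eq, if_neg hne]
          calc Stmt16Aux.prodG r n (chains m1) * He r n m1 *
                (Stmt16Aux.prodG r n (chains l1).reverse * He r n lam0 * cW * He r n lam0 *
                  Stmt16Aux.prodG r n (chains l2)) * He r n m2 *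
                Stmt16Aux.prodG r n (chains m2).reverse
              = Stmt16Aux.prodG r n (chains m1) * (He r n m1 *
                  (Stmt16Aux.prodG r n (chains l1).reverse * (He r n lam0 * (cW *
                  (He r n lam0 * (Stmt16Aux.prodG r n (chains l2) * (He r n m2 *
                  Stmt16Aux.prodG r n (chains m2).reverse))))))) := by
                simp only [mul_assoc]
            _ = Stmt16Aux.prodG r n (chains m1) * (He r n m1 *
                  (Stmt16Aux.prodG r n (chains l1).reverse * (He r n lam0 * (cW *
                  (He r n lam0 * (He r n (applyChain (chains l2) m2) *
                  (Stmt16Aux.prodG r n (chains l2) *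
                  Stmt16Aux.prodG r n (chains m2).reverse))))))) := by
                rw [Stmt16Aux.massoc2 r n hA2']
            _ = 0 := by
                rw [Stmt16Aux.mar r n hz]
                simp
      · rw [if_neg (fun h => h1 h.1)]
        have hne : applyChain (chains l1) m1 ≠ lam0 := by
          rw [← hA1]
          exact fun h => h1 (Stmt16Aux.applyChain_inj r n (chains l1) h)
        have hB1 : He r n m1 * Stmt16Aux.prodG r n (chains l1).reverse =
            Stmt16Aux.prodG r n (chains l1).reverse *
              He r n (applyChain (chains l1) m1) := by
          rw [Stmt16Aux.He_prodG_rev]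
        have hz : He r n (applyChain (chains l1) m1) * He r n lam0 = 0 := by
          rw [Stmt16Aux.orth_eq, if_neg hne]
        calc Stmt16Aux.prodG r n (chains m1) * He r n m1 *
              (Stmt16Aux.prodG r n (chains l1).reverse * He r n lam0 * cW * He r n lam0 *
                Stmt16Aux.prodG r n (chains l2)) * He r n m2 *
              Stmt16Aux.prodG r n (chains m2).reverse
            = Stmt16Aux.prodG r n (chains m1) * (He r n m1 *
                (Stmt16Aux.prodG r n (chains l1).reverse * (He r n lam0 * (cW *
                (He r n lam0 * (Stmt16Aux.prodG r n (chains l2) * (He r n m2 *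
                Stmt16Aux.prodG r n (chains m2).reverse))))))) := by
              simp only [mul_assoc]
          _ = Stmt16Aux.prodG r n (chains m1) *
                (Stmt16Aux.prodG r n (chains l1).reverse *
                (He r n (applyChain (chains l1) m1) * (He r n lam0 * (cW *
                (He r n lam0 * (Stmt16Aux.prodG r n (chains l2) * (He r n m2 *
                Stmt16Aux.prodG r n (chains m2).reverse))))))) := by
              rw [Stmt16Aux.massoc2 r n hB1]
          _ = 0 := by
              rw [Stmt16Aux.mar r n hz]
              simp
    · rw [ΨM, if_neg horb']
      rw [if_neg]
      rintro ⟨rfl, rfl⟩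
      exact horb' horb
  have hkl : klPropE r n bar gfam wh l1 l2
      (ΨM r n chains (tauP' r n chains l1 * He r n lam0 * cW * He r n lam0 *
        tauP r n chains l2)) := by
    constructor
    · intro m1 m2
      rw [hval]
      split
      · exact hcW_bar
      · exact map_zero bar
    · obtain ⟨c, hc, hcw⟩ := hcW_congr
      exact ⟨c, hc, fun m1 m2 => by rw [hval]; split <;> [exact hcw; rfl]⟩
  have := huniq _ hkl
  intro m1 m2
  rw [← this]
end
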